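/- arXiv:2001.05867 — 6 statements merged into one kernel-verified Lean document; each statement's English description precedes it below -/
import Mathlib

section
/- Let G be a Polish group acting continuously on a Polish space X, and let C ⊆ X be a Borel G-lg comeager set. Then the orbit equivalence relation E^C_G = E^X_G ∩ (C × C) on C is Borel bireducible with E^X_G on X. More precisely, there is a Borel map F : X → C such that for all x, y ∈ X, (x,y) ∈ E^X_G if and only if (F(x), F(y)) ∈ E^X_G, and F(x) lies in the orbit of x for every x. -/
/-!
Take `F x = s x • x` for a Borel `s : X → G` with `s x • x ∈ C`: a map moving every point inside
its orbit reduces `E^X_G` to itself. Such an `s` is a Borel uniformization of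
`D = {(x, g) | g • x ∈ C}`, whose sections are comeagre. This category uniformization is proved by
induction over the Borel subsets of `X × G`, generated by rectangles `A ×ˢ V` with `V` open. Along
the induction one keeps, for every basic ball `B_v` of `G`, the Borel dependence on `x` of "the
section `D_x` is meagre in `B_v`" (Montgomery–Novikov), and a code, Borel in `x`, for a dense `Gδ`
inside `D_x ∩ B_v` whenever `D_x` is comeagre in `B_v`. For countable unions the code is glued
along a greedily chosen disjoint family of balls on each of which one piece is comeagre. Finally a
point of the coded dense `Gδ` is reached by nested balls chosen measurably in `x`, and completeness
of `G` provides their common point.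
-/

open Set Filter Topology Metric TopologicalSpace

namespace CategoryUniformization

section BasicBalls

variable (Y : Type*) [PseudoMetricSpace Y] [SeparableSpace Y] [Nonempty Y]

/- Basic balls are indexed by `ℕ`: the index `p` codes the centre `denseSeq Y p.unpair.1` and
the radius `(1 / 2) ^ p.unpair.2`. -/

noncomputable def basicCenter (p : ℕ) : Y := denseSeq Y p.unpair.1

noncomputable def basicRadius (p : ℕ) : ℝ := (1 / 2) ^ p.unpair.2

noncomputable def basicBall (p : ℕ) : Set Y := ball (basicCenter Y p) (basicRadius p)

noncomputable def closedBasicBall (p : ℕ) : Set Y := closedBall (basicCenter Y p) (basicRadius p)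

noncomputable def ballUnion (S : Set ℕ) : Set Y := ⋃ n ∈ S, basicBall Y n

variable {Y}

lemma basicRadius_pos (p : ℕ) : 0 < basicRadius p := by unfold basicRadius; positivity

lemma basicRadius_le_one (p : ℕ) : basicRadius p ≤ 1 :=
  pow_le_one₀ (by norm_num) (by norm_num)

lemma isOpen_basicBall (p : ℕ) : IsOpen (basicBall Y p) := isOpen_ball

lemma basicCenter_mem_basicBall (p : ℕ) : basicCenter Y p ∈ basicBall Y p :=
  mem_ball_self (basicRadius_pos p)

lemma basicBall_subset_closedBasicBall (p : ℕ) : basicBall Y p ⊆ closedBasicBall Y p :=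
  ball_subset_closedBall

lemma isClosed_closedBasicBall (p : ℕ) : IsClosed (closedBasicBall Y p) := isClosed_closedBall

@[simp]
lemma mem_ballUnion {S : Set ℕ} {g : Y} : g ∈ ballUnion Y S ↔ ∃ n ∈ S, g ∈ basicBall Y n := by
  simp [ballUnion]

lemma exists_basicBall_subset {O : Set Y} (hO : IsOpen O) {g : Y} (hg : g ∈ O) {ε : ℝ}
    (hε : 0 < ε) : ∃ p, g ∈ basicBall Y p ∧ closedBasicBall Y p ⊆ O ∧ basicRadius p < ε := by
  obtain ⟨δ, hδ, hδO⟩ := Metric.isOpen_iff.1 hO g hg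
  obtain ⟨k, hk⟩ :=
    exists_pow_lt_of_lt_one (lt_min (half_pos hδ) hε) (by norm_num : (1 / 2 : ℝ) < 1)
  obtain ⟨i, hi⟩ := Metric.denseRange_iff.1 (denseRange_denseSeq Y) g _
    (by positivity : (0 : ℝ) < (1 / 2) ^ k)
  have hr : basicRadius (Nat.pair i k) = (1 / 2) ^ k := by simp [basicRadius]
  have hc : basicCenter Y (Nat.pair i k) = denseSeq Y i := by simp [basicCenter]
  refine ⟨Nat.pair i k, ?_, fun y hy => hδO ?_, hr ▸ hk.trans_le (min_le_right _ _)⟩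
  · rw [basicBall, mem_ball, hr, hc]; exact hi
  · rw [closedBasicBall, mem_closedBall, hr, hc] at hy
    rw [mem_ball]
    calc dist y g ≤ dist y (denseSeq Y i) + dist (denseSeq Y i) g := dist_triangle _ _ _
      _ < (1 / 2) ^ k + (1 / 2) ^ k := add_lt_add_of_le_of_lt hy (by rwa [dist_comm])
      _ < δ := by linarith [hk.trans_le (min_le_left _ _)]

lemma subset_closure_of_forall_basicBall {W S : Set Y} (hW : IsOpen W)
    (h : ∀ u, basicBall Y u ⊆ W → (basicBall Y u ∩ S).Nonempty) : W ⊆ closure S := by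
  intro g hg
  rw [_root_.mem_closure_iff]
  intro O hO hgO
  obtain ⟨u, hgu, hu, -⟩ := exists_basicBall_subset (hO.inter hW) ⟨hgO, hg⟩ one_pos
  have huOW := (basicBall_subset_closedBasicBall u).trans hu
  exact (h u (huOW.trans inter_subset_right)).mono
    (inter_subset_inter_left _ (huOW.trans inter_subset_left))

lemma subset_ballUnion {W : Set Y} (hW : IsOpen W) :
    W ⊆ ballUnion Y {n | basicBall Y n ⊆ W} := by
  intro g hg
  obtain ⟨p, hgp, hp, -⟩ := exists_basicBall_subset hW hg one_pos
  exact mem_ballUnion.2 ⟨p, (basicBall_subset_closedBasicBall p).trans hp, hgp⟩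

lemma not_isMeagre_basicBall [BaireSpace Y] (p : ℕ) : ¬ IsMeagre (basicBall Y p) :=
  not_isMeagre_of_isOpen (isOpen_basicBall p) ⟨_, basicCenter_mem_basicBall p⟩

end BasicBalls

section Category

variable {Y : Type*} [PseudoMetricSpace Y] [SeparableSpace Y] [Nonempty Y]
  [MeasurableSpace Y] [BorelSpace Y]

lemma exists_basicBall_isMeagre_compl_inter {S : Set Y} (hS : MeasurableSet S) {u : ℕ}
    (h : ¬ IsMeagre (S ∩ basicBall Y u)) :
    ∃ w, basicBall Y w ⊆ basicBall Y u ∧ IsMeagre (Sᶜ ∩ basicBall Y w) := by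
  obtain ⟨O, hO, hSO⟩ := hS.residualEq_isOpen
  have hSO' : ∀ᶠ g in residual Y, g ∈ S ↔ g ∈ O := Filter.eventuallyEq_set.1 hSO
  obtain ⟨g, hgO, hgu⟩ : (O ∩ basicBall Y u).Nonempty := by
    by_contra hempty
    refine h (Filter.mem_of_superset hSO' fun g hg hgS => hempty ⟨g, hg.1 hgS.1, hgS.2⟩)
  obtain ⟨w, -, hw, -⟩ := exists_basicBall_subset (hO.inter (isOpen_basicBall u)) ⟨hgO, hgu⟩ one_pos
  have hwOu := (basicBall_subset_closedBasicBall w).trans hw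
  exact ⟨w, hwOu.trans inter_subset_right,
    Filter.mem_of_superset hSO' fun g hg hgS => hgS.1 (hg.2 (hwOu hgS.2).1)⟩

variable [BaireSpace Y]

lemma isMeagre_compl_inter_basicBall_iff {S : Set Y} (hS : MeasurableSet S) (v : ℕ) :
    IsMeagre (Sᶜ ∩ basicBall Y v) ↔
      ∀ u, basicBall Y u ⊆ basicBall Y v → ¬ IsMeagre (S ∩ basicBall Y u) := by
  refine ⟨fun h u huv hu => not_isMeagre_basicBall (Y := Y) u ?_, fun h => ?_⟩
  · refine (hu.union (h.mono (inter_subset_inter_right _ huv))).mono fun g hg => ?_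
    by_cases hgS : g ∈ S
    exacts [Or.inl ⟨hgS, hg⟩, Or.inr ⟨hgS, hg⟩]
  · by_contra hv
    obtain ⟨w, hwv, hw⟩ := exists_basicBall_isMeagre_compl_inter hS.compl hv
    exact h w hwv (compl_compl S ▸ hw)

end Category

section Greedy

variable {α : Type*}

def greedyDisjoint (c : ℕ → Prop) (V : ℕ → Set α) (j : ℕ) : Prop :=
  c j ∧ ∀ j' < j, greedyDisjoint c V j' → Disjoint (V j') (V j)
termination_by j

variable {c : ℕ → Prop} {V : ℕ → Set α}

lemma greedyDisjoint_iff {j : ℕ} : greedyDisjoint c V j ↔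
    c j ∧ ∀ j' < j, greedyDisjoint c V j' → Disjoint (V j') (V j) := by
  rw [greedyDisjoint]

lemma greedyDisjoint.prop {j : ℕ} (h : greedyDisjoint c V j) : c j := (greedyDisjoint_iff.1 h).1

lemma greedyDisjoint.disjoint {j j' : ℕ} (h : greedyDisjoint c V j) (h' : greedyDisjoint c V j')
    (hne : j ≠ j') : Disjoint (V j) (V j') := by
  rcases hne.lt_or_gt with hlt | hlt
  · exact (greedyDisjoint_iff.1 h').2 j hlt h
  · exact ((greedyDisjoint_iff.1 h).2 j' hlt h').symm

lemma exists_greedyDisjoint_not_disjoint {j : ℕ} (hj : c j) (hV : (V j).Nonempty) :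
    ∃ j', greedyDisjoint c V j' ∧ ¬ Disjoint (V j') (V j) := by
  by_cases hacc : greedyDisjoint c V j
  · exact ⟨j, hacc, by simpa using hV.ne_empty⟩
  · rw [greedyDisjoint_iff] at hacc
    push Not at hacc
    obtain ⟨j', -, hj', hdisj⟩ := hacc hj
    exact ⟨j', hj', hdisj⟩

lemma measurable_greedyDisjoint {X : Type*} [MeasurableSpace X] {c : X → ℕ → Prop}
    (hc : ∀ j, Measurable fun x => c x j) (j : ℕ) :
    Measurable fun x => greedyDisjoint (c x) V j := by
  induction j using Nat.strong_induction_on with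
  | _ j ih =>
    have hrec : (fun x => greedyDisjoint (c x) V j) =
        fun x => c x j ∧ ∀ j' < j, greedyDisjoint (c x) V j' → Disjoint (V j') (V j) :=
      funext fun x => propext greedyDisjoint_iff
    rw [hrec]
    refine (hc j).and (Measurable.forall fun j' => ?_)
    by_cases hj' : j' < j
    · simpa [hj'] using (ih j' hj').imp measurable_const
    · simp [hj']

end Greedy

section Kernels

variable {X Y : Type*} [PseudoMetricSpace Y] [SeparableSpace Y] [Nonempty Y]

variable (Y) in
def SectionMeagreIn (D : Set (X × Y)) (x : X) (v : ℕ) : Prop :=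
  IsMeagre (Prod.mk x ⁻¹' D ∩ basicBall Y v)

lemma sectionMeagreIn_iUnion_iff {T : ℕ → Set (X × Y)} {x : X} {v : ℕ} :
    SectionMeagreIn Y (⋃ i, T i) x v ↔ ∀ i, SectionMeagreIn Y (T i) x v := by
  simp only [SectionMeagreIn, preimage_iUnion, iUnion_inter]
  exact ⟨fun h i => h.mono (subset_iUnion (fun i => Prod.mk x ⁻¹' T i ∩ basicBall Y v) i),
    isMeagre_iUnion⟩

variable (Y) in
/-- Candidate `j` proposes a ball `B_{j.unpair.1}` of `B_v` in which `T j.unpair.2` is comeagre. -/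
def ComeagreCandidate (T : ℕ → Set (X × Y)) (v : ℕ) (x : X) (j : ℕ) : Prop :=
  SectionMeagreIn Y (T j.unpair.2)ᶜ x j.unpair.1 ∧ basicBall Y j.unpair.1 ⊆ basicBall Y v

variable [MeasurableSpace X]

variable (Y) in
/-- A Borel code for dense `Gδ` subsets of comeagre sections: whenever the section `D_x` is
comeagre in the ball `B_v`, the open sets `ballUnion (U v m x)`, `m : ℕ`, are dense in `B_v` and
their intersection lies in `D_x`. -/
def HasGδKernel (D : Set (X × Y)) : Prop :=
  ∃ U : ℕ → ℕ → X → Set ℕ,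
    (∀ v m n, Measurable fun x => n ∈ U v m x) ∧
    (∀ v m x, ∀ n ∈ U v m x, basicBall Y n ⊆ basicBall Y v) ∧
    ∀ x v, SectionMeagreIn Y Dᶜ x v →
      (∀ m, basicBall Y v ⊆ closure (ballUnion Y (U v m x))) ∧
      ⋂ m, ballUnion Y (U v m x) ⊆ Prod.mk x ⁻¹' D

lemma HasGδKernel.iInter {T : ℕ → Set (X × Y)} (h : ∀ i, HasGδKernel Y (T i)) :
    HasGδKernel Y (⋂ i, T i) := by
  choose U hU_meas hU_sub hU using h
  refine ⟨fun v m x => U m.unpair.1 v m.unpair.2 x, fun v m n => hU_meas _ _ _ _,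
    fun v m x => hU_sub _ _ _ _, fun x v hv => ?_⟩
  have hvi : ∀ i, SectionMeagreIn Y (T i)ᶜ x v := fun i => IsMeagre.mono
    (inter_subset_inter_left _ (preimage_mono (compl_subset_compl.2 (iInter_subset _ i)))) hv
  refine ⟨fun m => (hU _ x v (hvi _)).1 _,
    fun g hg => mem_iInter.2 fun i => (hU i x v (hvi i)).2 ?_⟩
  exact mem_iInter.2 fun m => by simpa using mem_iInter.1 hg (Nat.pair i m)

variable [BaireSpace Y]

lemma hasGδKernel_prod {A : Set X} (hA : MeasurableSet A) {V : Set Y} (hV : IsOpen V) :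
    HasGδKernel Y (A ×ˢ V) := by
  refine ⟨fun v _ x => {n | x ∈ A ∧ basicBall Y n ⊆ V ∩ basicBall Y v},
    fun v m n => hA.mem.and measurable_const, fun v m x n hn => hn.2.trans inter_subset_right,
    fun x v hv => ?_⟩
  have hxA : x ∈ A := by
    by_contra hxA
    refine not_isMeagre_basicBall (Y := Y) v (IsMeagre.mono ?_ hv)
    exact fun g hg => ⟨fun hg' => hxA hg'.1, hg⟩
  have hVv : IsMeagre (Vᶜ ∩ basicBall Y v) := by
    simpa [SectionMeagreIn, mk_preimage_prod_right hxA] using hv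
  refine ⟨fun m => subset_closure_of_forall_basicBall (isOpen_basicBall v) fun u huv => ?_, ?_⟩
  · obtain ⟨g, hgu, hgV⟩ : (basicBall Y u ∩ V).Nonempty := by
      by_contra hempty
      refine not_isMeagre_basicBall (Y := Y) u (hVv.mono ?_)
      exact fun g hg => ⟨fun hgV => hempty ⟨g, hg, hgV⟩, huv hg⟩
    obtain ⟨n, hgn, hn, -⟩ :=
      exists_basicBall_subset ((isOpen_basicBall u).inter hV) ⟨hgu, hgV⟩ one_pos
    have hnuV := (basicBall_subset_closedBasicBall n).trans hn
    exact ⟨g, hgu, mem_ballUnion.2 ⟨n, ⟨hxA, fun y hy => ⟨(hnuV hy).2, huv (hnuV hy).1⟩⟩, hgn⟩⟩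
  · intro g hg
    obtain ⟨n, ⟨-, hn⟩, hgn⟩ := mem_ballUnion.1 (mem_iInter.1 hg 0)
    exact ⟨hxA, (hn hgn).1⟩

lemma hasGδKernel_prod_compl {A : Set X} (hA : MeasurableSet A) {V : Set Y} (hV : IsOpen V) :
    HasGδKernel Y (A ×ˢ V)ᶜ := by
  refine ⟨fun v _ x => {n | basicBall Y n ⊆ basicBall Y v ∧ (x ∈ A → Disjoint (basicBall Y n) V)},
    fun v m n => measurable_const.and (hA.mem.imp measurable_const), fun v m x n hn => hn.1,
    fun x v hv => ?_⟩
  have hdisj : x ∈ A → Disjoint (basicBall Y v) V := by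
    intro hxA
    have hVv : IsMeagre (V ∩ basicBall Y v) := by
      simpa [SectionMeagreIn, mk_preimage_prod_right hxA] using hv
    rw [disjoint_iff_inter_eq_empty, inter_comm, ← not_nonempty_iff_eq_empty]
    exact fun hne => not_isMeagre_of_isOpen (hV.inter (isOpen_basicBall v)) hne hVv
  refine ⟨fun m => (subset_ballUnion (isOpen_basicBall v)).trans (subset_closure.trans' ?_), ?_⟩
  · exact fun g hg => by
      obtain ⟨n, hn, hgn⟩ := mem_ballUnion.1 hg
      exact mem_ballUnion.2 ⟨n, ⟨hn, fun hxA => (hdisj hxA).mono_left hn⟩, hgn⟩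
  · rintro g hg ⟨hxA, hgV⟩
    obtain ⟨n, ⟨-, hn⟩, hgn⟩ := mem_ballUnion.1 (mem_iInter.1 hg 0)
    exact disjoint_left.1 (hn hxA) hgn hgV

end Kernels

section Tame

variable {X Y : Type*} [MeasurableSpace X] [PseudoMetricSpace Y] [SeparableSpace Y] [Nonempty Y]
  [MeasurableSpace Y]

variable (Y) in
/-- The invariant of the induction over Borel sets. It must survive complements, hence its
symmetry in `D` and `Dᶜ`. -/
structure CategoryTame (D : Set (X × Y)) : Prop where
  measurableSet : MeasurableSet D
  measurable_meagre : ∀ v, Measurable fun x => SectionMeagreIn Y D x v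
  measurable_meagre_compl : ∀ v, Measurable fun x => SectionMeagreIn Y Dᶜ x v
  kernel : HasGδKernel Y D
  kernel_compl : HasGδKernel Y Dᶜ

lemma CategoryTame.compl {D : Set (X × Y)} (h : CategoryTame Y D) : CategoryTame Y Dᶜ where
  measurableSet := h.measurableSet.compl
  measurable_meagre := h.measurable_meagre_compl
  measurable_meagre_compl := by simpa only [compl_compl] using h.measurable_meagre
  kernel := h.kernel_compl
  kernel_compl := by simpa only [compl_compl] using h.kernel

variable [BaireSpace Y] [BorelSpace Y]

lemma measurable_sectionMeagreIn_compl {D : Set (X × Y)} (hD : MeasurableSet D)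
    (h : ∀ v, Measurable fun x => SectionMeagreIn Y D x v) (v : ℕ) :
    Measurable fun x => SectionMeagreIn Y Dᶜ x v := by
  have hiff : (fun x => SectionMeagreIn Y Dᶜ x v) =
      fun x => ∀ u, basicBall Y u ⊆ basicBall Y v → ¬ SectionMeagreIn Y D x u :=
    funext fun x => propext <| isMeagre_compl_inter_basicBall_iff (measurable_prodMk_left hD) v
  rw [hiff]
  exact Measurable.forall fun u => measurable_const.imp (h u).not

lemma exists_greedyDisjoint_comeagreCandidate {T : ℕ → Set (X × Y)}
    (hT : ∀ i, MeasurableSet (T i)) {x : X} {v u : ℕ} (hv : SectionMeagreIn Y (⋃ i, T i)ᶜ x v)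
    (huv : basicBall Y u ⊆ basicBall Y v) :
    ∃ j, greedyDisjoint (ComeagreCandidate Y T v x) (fun j => basicBall Y j.unpair.1) j ∧
      (basicBall Y j.unpair.1 ∩ basicBall Y u).Nonempty := by
  have hu : ¬ SectionMeagreIn Y (⋃ i, T i) x u :=
    (isMeagre_compl_inter_basicBall_iff (measurable_prodMk_left (MeasurableSet.iUnion hT)) v).1
      hv u huv
  obtain ⟨i, hi⟩ : ∃ i, ¬ SectionMeagreIn Y (T i) x u := by
    simpa [sectionMeagreIn_iUnion_iff] using hu
  obtain ⟨w, hwu, hw⟩ := exists_basicBall_isMeagre_compl_inter (measurable_prodMk_left (hT i)) hi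
  obtain ⟨j, hj, hjw⟩ := exists_greedyDisjoint_not_disjoint (c := ComeagreCandidate Y T v x)
    (V := fun j => basicBall Y j.unpair.1) (j := Nat.pair w i)
    (by simpa [ComeagreCandidate] using ⟨hw, hwu.trans huv⟩)
    (by simpa using ⟨_, basicCenter_mem_basicBall w⟩)
  obtain ⟨g, hgj, hgw⟩ := not_disjoint_iff.1 hjw
  exact ⟨j, hj, g, hgj, hwu (by simpa using hgw)⟩

lemma HasGδKernel.iUnion {T : ℕ → Set (X × Y)} (hT : ∀ i, MeasurableSet (T i))
    (hmeas : ∀ i v, Measurable fun x => SectionMeagreIn Y (T i)ᶜ x v)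
    (h : ∀ i, HasGδKernel Y (T i)) : HasGδKernel Y (⋃ i, T i) := by
  choose U hU_meas hU_sub hU using h
  let V : ℕ → Set Y := fun j => basicBall Y j.unpair.1
  refine ⟨fun v m x => {n | ∃ j, greedyDisjoint (ComeagreCandidate Y T v x) V j ∧
      n ∈ U j.unpair.2 j.unpair.1 m x},
    fun v m n => Measurable.exists fun j =>
      (measurable_greedyDisjoint (fun j => (hmeas _ _).and measurable_const) j).and
        (hU_meas _ _ _ _),
    fun v m x n ⟨j, hj, hn⟩ => (hU_sub _ _ _ _ _ hn).trans hj.prop.2, fun x v hv => ?_⟩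
  refine ⟨fun m => subset_closure_of_forall_basicBall (isOpen_basicBall v) fun u huv => ?_, ?_⟩
  · obtain ⟨j, hj, g, hgj, hgu⟩ := exists_greedyDisjoint_comeagreCandidate hT hv huv
    have hdense := (hU j.unpair.2 x j.unpair.1 hj.prop.1).1 m hgj
    obtain ⟨p, ⟨hpu, -⟩, hp⟩ := _root_.mem_closure_iff.1 hdense _
      ((isOpen_basicBall u).inter (isOpen_basicBall _)) ⟨hgu, hgj⟩
    obtain ⟨n, hn, hpn⟩ := mem_ballUnion.1 hp
    exact ⟨p, hpu, mem_ballUnion.2 ⟨n, ⟨j, hj, hn⟩, hpn⟩⟩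
  · intro g hg
    have hlevel : ∀ m, ∃ j, greedyDisjoint (ComeagreCandidate Y T v x) V j ∧ g ∈ V j ∧
        g ∈ ballUnion Y (U j.unpair.2 j.unpair.1 m x) := by
      intro m
      obtain ⟨n, ⟨j, hj, hn⟩, hgn⟩ := mem_ballUnion.1 (mem_iInter.1 hg m)
      exact ⟨j, hj, hU_sub _ _ _ _ _ hn hgn, mem_ballUnion.2 ⟨n, hn, hgn⟩⟩
    obtain ⟨j, hj, hgj, -⟩ := hlevel 0
    -- accepted balls are pairwise disjoint, so every level is witnessed by the same candidate
    have hsame : ∀ m, g ∈ ballUnion Y (U j.unpair.2 j.unpair.1 m x) := by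
      intro m
      obtain ⟨j', hj', hgj', hgm⟩ := hlevel m
      obtain rfl : j' = j := by_contra fun hne => disjoint_left.1 (hj'.disjoint hj hne) hgj' hgj
      exact hgm
    have hgT := (hU j.unpair.2 x j.unpair.1 hj.prop.1).2 (mem_iInter.2 hsame)
    simp only [mem_preimage, mem_iUnion] at hgT ⊢
    exact ⟨_, hgT⟩

lemma categoryTame_prod {A : Set X} (hA : MeasurableSet A) {V : Set Y} (hV : IsOpen V) :
    CategoryTame Y (A ×ˢ V) := by
  have hAV := hA.prod hV.measurableSet
  have hmeagre : ∀ v, Measurable fun x => SectionMeagreIn Y (A ×ˢ V) x v := by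
    intro v
    have hiff : (fun x => SectionMeagreIn Y (A ×ˢ V) x v) =
        fun x => x ∈ A → IsMeagre (V ∩ basicBall Y v) := by
      ext x
      by_cases hx : x ∈ A <;>
        simp [SectionMeagreIn, hx, mk_preimage_prod_right, mk_preimage_prod_right_eq_empty,
          IsMeagre.empty]
    rw [hiff]
    exact hA.mem.imp measurable_const
  exact ⟨hAV, hmeagre, measurable_sectionMeagreIn_compl hAV hmeagre, hasGδKernel_prod hA hV,
    hasGδKernel_prod_compl hA hV⟩

lemma CategoryTame.iUnion {T : ℕ → Set (X × Y)} (h : ∀ i, CategoryTame Y (T i)) :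
    CategoryTame Y (⋃ i, T i) := by
  have hT := MeasurableSet.iUnion fun i => (h i).measurableSet
  have hmeagre : ∀ v, Measurable fun x => SectionMeagreIn Y (⋃ i, T i) x v := fun v => by
    simpa only [sectionMeagreIn_iUnion_iff] using
      Measurable.forall fun i => (h i).measurable_meagre v
  refine ⟨hT, hmeagre, measurable_sectionMeagreIn_compl hT hmeagre,
    HasGδKernel.iUnion (fun i => (h i).measurableSet) (fun i => (h i).measurable_meagre_compl)
      (fun i => (h i).kernel), ?_⟩
  rw [compl_iUnion]
  exact HasGδKernel.iInter fun i => (h i).kernel_compl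

theorem categoryTame_of_measurableSet {D : Set (X × Y)} (hD : MeasurableSet D) :
    CategoryTame Y D := by
  have hopen : IsCountablySpanning {V : Set Y | IsOpen V} :=
    ⟨fun _ => univ, fun _ => isOpen_univ, iUnion_const _⟩
  have hgen : @MeasurableSet _ (MeasurableSpace.generateFrom
      (image2 (· ×ˢ ·) {A : Set X | MeasurableSet A} {V : Set Y | IsOpen V})) D := by
    rw [← generateFrom_prod_eq isCountablySpanning_measurableSet hopen,
      MeasurableSpace.generateFrom_measurableSet]
    rwa [BorelSpace.measurable_eq (α := Y)] at hD
  clear hD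
  induction D, hgen using MeasurableSpace.generateFrom_induction with
  | hC _ hrect =>
    obtain ⟨A, hA, V, hV, rfl⟩ := hrect
    exact categoryTame_prod hA hV
  | empty => simpa using categoryTame_prod (X := X) (Y := Y) MeasurableSet.empty isOpen_empty
  | compl _ _ h => exact h.compl
  | iUnion _ _ h => exact CategoryTame.iUnion h

end Tame

section Selection

lemma exists_measurable_forall_of_exists {X : Type*} [MeasurableSpace X] {p : X → ℕ → Prop}
    (hp : ∀ n, Measurable fun x => p x n) (h : ∀ x, ∃ n, p x n) :
    ∃ f : X → ℕ, Measurable f ∧ ∀ x, p x (f x) := by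
  classical
  exact ⟨fun x => Nat.find (h x), measurable_find h fun n => (hp n).setOf,
    fun x => Nat.find_spec (h x)⟩

variable {X Y : Type*} [MeasurableSpace X] [PseudoMetricSpace Y] [SeparableSpace Y] [Nonempty Y]

lemma exists_basicBall_subset_ballUnion {S : Set ℕ} {i : ℕ}
    (hS : basicBall Y i ⊆ closure (ballUnion Y S)) {ε : ℝ} (hε : 0 < ε) :
    ∃ p, closedBasicBall Y p ⊆ basicBall Y i ∧ basicRadius p < ε ∧
      ∃ n ∈ S, basicBall Y p ⊆ basicBall Y n := by
  obtain ⟨g, hgi, hg⟩ := _root_.mem_closure_iff.1 (hS (basicCenter_mem_basicBall i)) _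
    (isOpen_basicBall i) (basicCenter_mem_basicBall i)
  obtain ⟨n, hn, hgn⟩ := mem_ballUnion.1 hg
  obtain ⟨p, -, hp, hpε⟩ :=
    exists_basicBall_subset ((isOpen_basicBall i).inter (isOpen_basicBall n)) ⟨hgi, hgn⟩ hε
  exact ⟨p, hp.trans inter_subset_left, hpε, n, hn,
    (basicBall_subset_closedBasicBall p).trans (hp.trans inter_subset_right)⟩

variable [CompleteSpace Y] [MeasurableSpace Y] [BorelSpace Y]

lemma exists_measurable_mem_basicBall_of_nested {I : ℕ → X → ℕ} (hI : ∀ m, Measurable (I m))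
    (hnest : ∀ m x, closedBasicBall Y (I (m + 1) x) ⊆ basicBall Y (I m x))
    (hrad : ∀ m x, basicRadius (I (m + 1) x) < (1 / 2) ^ m) :
    ∃ s : X → Y, Measurable s ∧ ∀ m x, s x ∈ basicBall Y (I m x) := by
  have hanti : ∀ x, Antitone fun m => basicBall Y (I m x) := fun x =>
    antitone_nat_of_succ_le fun m => (basicBall_subset_closedBasicBall _).trans (hnest m x)
  have hdist : ∀ x m,
      dist (basicCenter Y (I m x)) (basicCenter Y (I (m + 1) x)) ≤ 2 * (1 / 2) ^ m := by
    intro x m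
    have hr : basicRadius (I m x) ≤ 2 * (1 / 2) ^ m := by
      cases m with
      | zero => simpa using (basicRadius_le_one _).trans one_le_two
      | succ m => linarith [hrad m x, pow_succ (1 / 2 : ℝ) m]
    have hmem : basicCenter Y (I (m + 1) x) ∈ basicBall Y (I m x) :=
      hanti x m.le_succ (basicCenter_mem_basicBall _)
    rw [basicBall, mem_ball, dist_comm] at hmem
    linarith
  choose s hs using fun x => cauchySeq_tendsto_of_complete
    (cauchySeq_of_le_geometric _ _ (by norm_num) (hdist x))
  refine ⟨s, measurable_of_tendsto_metrizable' atTop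
    (fun m => (measurable_from_top (f := basicCenter Y)).comp (hI m))
    (tendsto_pi_nhds.2 hs), fun m x => hnest m x ?_⟩
  refine (isClosed_closedBasicBall _).mem_of_tendsto (hs x) (eventually_atTop.2 ⟨m + 1, ?_⟩)
  exact fun k hk => basicBall_subset_closedBasicBall _ (hanti x hk (basicCenter_mem_basicBall _))

theorem exists_measurable_mem_iInter_ballUnion {U : ℕ → X → Set ℕ}
    (hU : ∀ m n, Measurable fun x => n ∈ U m x) {v : ℕ}
    (hdense : ∀ m x, basicBall Y v ⊆ closure (ballUnion Y (U m x))) :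
    ∃ s : X → Y, Measurable s ∧ ∀ x, s x ∈ ⋂ m, ballUnion Y (U m x) := by
  let P : ℕ → ℕ → X → ℕ → Prop := fun m i x p => basicBall Y i ⊆ basicBall Y v →
    closedBasicBall Y p ⊆ basicBall Y i ∧ basicRadius p < (1 / 2) ^ m ∧
      ∃ n ∈ U m x, basicBall Y p ⊆ basicBall Y n
  have hP : ∀ m i x, ∃ p, P m i x p := fun m i x => by
    by_cases hi : basicBall Y i ⊆ basicBall Y v
    · obtain ⟨p, hp⟩ := exists_basicBall_subset_ballUnion (hi.trans (hdense m x))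
        (by positivity : (0 : ℝ) < (1 / 2) ^ m)
      exact ⟨p, fun _ => hp⟩
    · exact ⟨0, fun h => absurd h hi⟩
  choose next hnext_meas hnext using fun m i => exists_measurable_forall_of_exists
    (fun p => measurable_const.imp <| measurable_const.and <| measurable_const.and <|
      Measurable.exists fun n => (hU m n).and measurable_const) (hP m i)
  let I : ℕ → X → ℕ := fun m x => Nat.rec v (fun m i => next m i x) m
  have hI : ∀ m, Measurable (I m) := by
    intro m
    induction m with
    | zero => exact measurable_const
    | succ m ih =>
      exact (measurable_from_prod_countable_right (f := fun q : ℕ × X => next m q.1 q.2)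
        fun i => hnext_meas m i).comp (ih.prodMk measurable_id)
  have hstep : ∀ m x, basicBall Y (I m x) ⊆ basicBall Y v ∧ P m (I m x) x (I (m + 1) x) :=
    fun m x => by
    induction m with
    | zero => exact ⟨subset_rfl, hnext 0 v x⟩
    | succ m ih =>
      have hsub := (basicBall_subset_closedBasicBall _).trans ((ih.2 ih.1).1.trans ih.1)
      exact ⟨hsub, hnext (m + 1) (I (m + 1) x) x⟩
  obtain ⟨s, hs, hsI⟩ := exists_measurable_mem_basicBall_of_nested hI
    (fun m x => ((hstep m x).2 (hstep m x).1).1) (fun m x => ((hstep m x).2 (hstep m x).1).2.1)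
  refine ⟨s, hs, fun x => mem_iInter.2 fun m => ?_⟩
  obtain ⟨n, hn, hsub⟩ := ((hstep m x).2 (hstep m x).1).2.2
  exact mem_ballUnion.2 ⟨n, hn, hsub (hsI (m + 1) x)⟩

end Selection

theorem exists_measurable_mem_of_residual {X Y : Type*} [MeasurableSpace X] [TopologicalSpace Y]
    [PolishSpace Y] [Nonempty Y] [MeasurableSpace Y] [BorelSpace Y] {D : Set (X × Y)}
    (hD : MeasurableSet D) (hres : ∀ x, Prod.mk x ⁻¹' D ∈ residual Y) :
    ∃ s : X → Y, Measurable s ∧ ∀ x, (x, s x) ∈ D := by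
  let := upgradeIsCompletelyMetrizable Y
  obtain ⟨U, hU_meas, -, hU⟩ := (categoryTame_of_measurableSet hD).kernel
  have hcomeagre : ∀ x, SectionMeagreIn Y Dᶜ x 0 := fun x =>
    IsMeagre.mono inter_subset_left (by simpa [IsMeagre] using hres x)
  obtain ⟨s, hs, hsD⟩ := exists_measurable_mem_iInter_ballUnion (hU_meas 0)
    fun m x => (hU x 0 (hcomeagre x)).1 m
  exact ⟨s, hs, fun x => (hU x 0 (hcomeagre x)).2 (hsD x)⟩

end CategoryUniformization

theorem exists_smul_eq_iff_of_forall_exists_smul_eq {G α : Type*} [Group G] [MulAction G α]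
    {F : α → α} (hF : ∀ x, ∃ g : G, g • x = F x) (x y : α) :
    (∃ g : G, g • x = y) ↔ ∃ g : G, g • F x = F y := by
  have horbit : ∀ z, MulAction.orbit G (F z) = MulAction.orbit G z := fun z =>
    MulAction.orbit_eq_iff.2 (MulAction.mem_orbit_iff.2 (hF z))
  simp only [← MulAction.mem_orbit_iff, ← MulAction.orbit_eq_iff, horbit]

theorem stmt4_general {G X : Type*} [Group G] [TopologicalSpace G]
    [PolishSpace G] [TopologicalSpace X] [MulAction G X]
    [ContinuousSMul G X] [MeasurableSpace X] [BorelSpace X] (C : Set X)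
    (hCBorel : MeasurableSet C)
    (hC : ∀ x : X, {g : G | g • x ∈ C} ∈ residual G) :
    ∃ F : X → X, Measurable F ∧ (∀ x : X, F x ∈ C) ∧
      (∀ x : X, ∃ g : G, g • x = F x) ∧
      (∀ x y : X, (∃ g : G, g • x = y) ↔ (∃ g : G, g • F x = F y)) := by
  borelize G
  have hact : Measurable fun p : X × G => p.2 • p.1 :=
    (continuous_snd.smul continuous_fst).measurable
  obtain ⟨s, hs, hsC⟩ :=
    CategoryUniformization.exists_measurable_mem_of_residual (hact hCBorel) hC
  have hF : ∀ x, ∃ g : G, g • x = s x • x := fun x => ⟨s x, rfl⟩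
  exact ⟨fun x => s x • x, hact.comp (measurable_id.prodMk hs), hsC, hF,
    exists_smul_eq_iff_of_forall_exists_smul_eq hF⟩

theorem stmt4 {G X : Type*} [Group G] [TopologicalSpace G] [IsTopologicalGroup G]
    [PolishSpace G] [TopologicalSpace X] [PolishSpace X] [MulAction G X]
    [ContinuousSMul G X] [MeasurableSpace X] [BorelSpace X] (C : Set X)
    (hCBorel : MeasurableSet C)
    (hC : ∀ x : X, {g : G | g • x ∈ C} ∈ residual G) :
    ∃ F : X → X, Measurable F ∧ (∀ x : X, F x ∈ C) ∧
      (∀ x : X, ∃ g : G, g • x = F x) ∧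
      (∀ x y : X, (∃ g : G, g • x = y) ↔ (∃ g : G, g • F x = F y)) :=
  stmt4_general C hCBorel hC
end

section
/- Let G be a group, V ⊆ G a symmetric subset invariant under conjugation, and suppose a set C_i in a G-set X is V-lacunary (g·x = y for g ∈ V, x,y ∈ C_i implies x = y). Fix g ∈ G and let C_{i+1} = C_i ∪ (g·C_i \ V·C_i). Then C_{i+1} is V-lacunary, provided the action restricted to C_i is free enough that h·x₀ = y₀ with h ∈ V and x₀, y₀ ∈ C_i forces x₀ = y₀. -/
open Pointwise

def IsLacunary {G X : Type*} [SMul G X] (V : Set G) (S : Set X) : Prop :=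
  ∀ x ∈ S, ∀ y ∈ S, ∀ v ∈ V, v • x = y → x = y

namespace IsLacunary

variable {G X : Type*} [Group G] [MulAction G X] {V : Set G} {S T : Set X}

theorem subset (hT : IsLacunary V T) (hST : S ⊆ T) : IsLacunary V S :=
  fun x hx y hy => hT x (hST hx) y (hST hy)

theorem smul_set (hS : IsLacunary V S) {g : G} (hV : ∀ v ∈ V, g⁻¹ * v * g ∈ V) :
    IsLacunary V (g • S) := by
  rintro _ ⟨x, hx, rfl⟩ _ ⟨y, hy, rfl⟩ v hv hvxy
  have hconj : (g⁻¹ * v * g) • x = y := by rw [mul_smul, mul_smul, hvxy, inv_smul_smul]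
  rw [hS x hx y hy _ (hV v hv) hconj]

/-- For symmetric `V`, a relation `v • x = y` between the two pieces can always be read
from `S` to `T`, so it suffices that `T` avoids `V • S`. -/
theorem union (hVsym : V⁻¹ = V) (hS : IsLacunary V S) (hT : IsLacunary V T)
    (hST : Disjoint (V • S) T) : IsLacunary V (S ∪ T) := by
  rintro x (hx | hx) y (hy | hy) v hv hvxy
  · exact hS x hx y hy v hv hvxy
  · exact (hST.ne_of_mem (Set.smul_mem_smul hv hx) hy hvxy).elim
  · have hv' : v⁻¹ ∈ V := hVsym ▸ Set.inv_mem_inv.mpr hv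
    refine (hST.ne_of_mem (Set.smul_mem_smul hv' hy) hx ?_).elim
    rw [← hvxy, inv_smul_smul]
  · exact hT x hx y hy v hv hvxy

end IsLacunary

/-- The algebraic inductive step: `C ∪ (g·C \ V·C)` is `V`-lacunary whenever `C` is,
for `V` symmetric and conjugacy-invariant. -/
theorem stmt7 {G X : Type*} [Group G] [MulAction G X]
    (V : Set G) (hVsym : V⁻¹ = V)
    (hVconj : ∀ h : G, ∀ v ∈ V, h * v * h⁻¹ ∈ V)
    (C : Set X)
    (hlac : ∀ x ∈ C, ∀ y ∈ C, ∀ v ∈ V, v • x = y → x = y)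
    (g : G) :
    ∀ x ∈ C ∪ (g • C \ V • C), ∀ y ∈ C ∪ (g • C \ V • C), ∀ v ∈ V,
      v • x = y → x = y := by
  have hgC : IsLacunary V (g • C) :=
    IsLacunary.smul_set hlac fun v hv => by simpa using hVconj g⁻¹ v hv
  exact IsLacunary.union hVsym hlac (hgC.subset Set.sdiff_subset) Set.disjoint_sdiff_right
end

section
/- Let G be a group acting on a set X, let V ⊆ G be symmetric with V = V^{-1}. Fix a countable dense subset {g_i} of G (G a topological group, V open). Define C_0 = B, C_{i+1} = C_i ∪ (g_i·C_i \ V·C_i), C = ⋃_i C_i. If B meets every orbit of the action, then V·V·C = X. -/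
open Pointwise

section Covering

variable {G X : Type*} [Group G] [MulAction G X] {V : Set G} {g : ℕ → G} {C : ℕ → Set X}

theorem monotone_of_eq_union {s : ℕ → Set X} (hsucc : ∀ i, C (i + 1) = C i ∪ s i) :
    Monotone C :=
  monotone_nat_of_le_succ fun i => (hsucc i).symm ▸ Set.subset_union_left

/-- Either `g i • y` is already `V`-close to `C i`, or it is added to `C (i + 1)`. -/
theorem smul_mem_smul_iUnion_of_mem (hV1 : (1 : G) ∈ V)
    (hsucc : ∀ i, C (i + 1) = C i ∪ (g i • C i \ V • C i)) {i : ℕ} {y : X} (hy : y ∈ C i) :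
    g i • y ∈ V • ⋃ j, C j := by
  by_cases hclose : g i • y ∈ V • C i
  · exact Set.smul_subset_smul_left (Set.subset_iUnion C i) hclose
  · have hnext : g i • y ∈ C (i + 1) :=
      (hsucc i).symm ▸ Or.inr ⟨Set.smul_mem_smul_set hy, hclose⟩
    exact ⟨1, hV1, _, Set.mem_iUnion_of_mem (i + 1) hnext, one_smul G _⟩

end Covering

theorem DenseRange.exists_mul_inv_mem {G : Type*} [Group G] [TopologicalSpace G]
    [IsTopologicalGroup G] {V : Set G} (hVopen : IsOpen V) (hV1 : (1 : G) ∈ V)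
    {g : ℕ → G} (hdense : DenseRange g) (h : G) : ∃ i, h * (g i)⁻¹ ∈ V :=
  hdense.exists_mem_open (hVopen.preimage (continuous_const.mul continuous_inv))
    ⟨h, by simpa using hV1⟩

theorem stmt8_general {G X : Type*} [Group G] [TopologicalSpace G] [IsTopologicalGroup G]
    [MulAction G X] (V : Set G) (hVopen : IsOpen V) (hV1 : (1 : G) ∈ V)
    (g : ℕ → G) (hdense : DenseRange g)
    (B : Set X) (hBcomplete : ∀ x : X, ∃ y ∈ B, ∃ h : G, h • y = x)
    (Cseq : ℕ → Set X) (h0 : Cseq 0 = B)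
    (hsucc : ∀ i : ℕ, Cseq (i + 1) = Cseq i ∪ (g i • Cseq i \ V • Cseq i)) :
    V • (V • ⋃ i, Cseq i) = Set.univ := by
  refine Set.eq_univ_of_forall fun x => ?_
  obtain ⟨y, hyB, h, rfl⟩ := hBcomplete x
  obtain ⟨i, hi⟩ := hdense.exists_mul_inv_mem hVopen hV1 h
  have hyC : y ∈ Cseq i := monotone_of_eq_union hsucc (Nat.zero_le i) (h0 ▸ hyB)
  have hx : (h * (g i)⁻¹) • g i • y = h • y := by rw [smul_smul, inv_mul_cancel_right]
  exact hx ▸ Set.smul_mem_smul hi (smul_mem_smul_iUnion_of_mem hV1 hsucc hyC)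

/-- The covering step: if `B` is a complete section, `{gᵢ}` is dense and `V` an open
symmetric neighbourhood of `1`, then the inductively defined `C = ⋃ Cᵢ` satisfies
`V·V·C = X`. -/
theorem stmt8 {G X : Type*} [Group G] [TopologicalSpace G] [IsTopologicalGroup G]
    [MulAction G X] (V : Set G) (hVopen : IsOpen V) (hV1 : (1 : G) ∈ V)
    (hVsym : V⁻¹ = V) (g : ℕ → G) (hdense : DenseRange g)
    (B : Set X) (hBcomplete : ∀ x : X, ∃ y ∈ B, ∃ h : G, h • y = x)
    (Cseq : ℕ → Set X) (h0 : Cseq 0 = B)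
    (hsucc : ∀ i : ℕ, Cseq (i + 1) = Cseq i ∪ (g i • Cseq i \ V • Cseq i)) :
    V • (V • ⋃ i, Cseq i) = Set.univ :=
  stmt8_general V hVopen hV1 g hdense B hBcomplete Cseq h0 hsucc
end

section
/- Let G be a Polish group acting continuously on a Polish space X, and let F ⊆ E^X_G be a Borel equivalence relation such that every G-orbit contains at most countably many F-classes. Then the orbit equivalence relation E^X_G is Borel. -/
/-!
Fix `x` and let `y = g • x`. The countably many `F`-classes meeting the orbit of `x` cover `G`
via `a ↦ a • x`, so by the Baire category theorem some `{a | (a • x, w) ∈ F}` is non-meager, and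
so is its right translate `{b | (b • y, w) ∈ F}`. Their product lies in
`{(a, b) | (a • x, b • y) ∈ F}`, which is therefore non-meager. Conversely, any point of this set
puts `x` and `y` in one orbit because `F` refines orbits. So the orbit relation is the set of
pairs whose section `{(a, b) | (a • x, b • y) ∈ F}` of a Borel subset of `(G × G) × (X × X)` is
non-meager, and that set is Borel by the category quantifier theorem (Kechris, 16.1).
-/

open Set Filter Topology TopologicalSpace

section Meagre

variable {α β : Type*} [TopologicalSpace α] [TopologicalSpace β]

theorem isMeagre_diff_of_residualEq {s t : Set α} (h : s =ᵇ t) : IsMeagre (s \ t) := by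
  filter_upwards [eventuallyEq_set.mp h] with x hx hmem
  exact hmem.2 (hx.mp hmem.1)

theorem isMeagre_iUnion_iff {ι : Sort*} [Countable ι] {f : ι → Set α} :
    IsMeagre (⋃ i, f i) ↔ ∀ i, IsMeagre (f i) :=
  ⟨fun h i => h.mono (subset_iUnion f i), isMeagre_iUnion⟩

theorem BaireMeasurableSet.exists_isOpen_isMeagre_diff {s U : Set α}
    (hs : BaireMeasurableSet s) (hU : IsOpen U) (h : ¬ IsMeagre (U ∩ s)) :
    ∃ V, IsOpen V ∧ V.Nonempty ∧ V ⊆ U ∧ IsMeagre (V \ s) := by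
  obtain ⟨u, hu, hsu⟩ := hs.residualEq_isOpen
  refine ⟨u ∩ U, hu.inter hU, ?_, inter_subset_right,
    (isMeagre_diff_of_residualEq hsu.symm).mono (sdiff_subset_sdiff_left inter_subset_left)⟩
  by_contra hempty
  refine h ((isMeagre_diff_of_residualEq hsu).mono ?_)
  rintro x ⟨hxU, hxs⟩
  exact ⟨hxs, fun hxu => hempty ⟨x, hxu, hxU⟩⟩

theorem BaireMeasurableSet.not_isMeagre_inter_iff [BaireSpace α] {b : Set (Set α)}
    (hb : IsTopologicalBasis b) {s U : Set α} (hs : BaireMeasurableSet s) (hU : IsOpen U) :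
    ¬ IsMeagre (U ∩ s) ↔ ∃ W ∈ b, W.Nonempty ∧ W ⊆ U ∧ IsMeagre (W \ s) := by
  constructor
  · intro h
    obtain ⟨V, hV, ⟨x, hxV⟩, hVU, hVs⟩ := hs.exists_isOpen_isMeagre_diff hU h
    obtain ⟨W, hWb, hxW, hWV⟩ := hb.exists_subset_of_mem_open hxV hV
    exact ⟨W, hWb, ⟨x, hxW⟩, hWV.trans hVU, hVs.mono (sdiff_subset_sdiff_left hWV)⟩
  · rintro ⟨W, hWb, hWne, hWU, hWs⟩ hUs
    refine not_isMeagre_of_isOpen (hb.isOpen hWb) hWne ((hWs.union hUs).mono fun x hx => ?_)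
    by_cases hxs : x ∈ s
    exacts [Or.inr ⟨hWU hx, hxs⟩, Or.inl ⟨hx, hxs⟩]

theorem BaireMeasurableSet.not_isMeagre_prod [BaireSpace (α × β)] {A : Set α} {B : Set β}
    (hA : BaireMeasurableSet A) (hB : BaireMeasurableSet B) (hA' : ¬ IsMeagre A)
    (hB' : ¬ IsMeagre B) : ¬ IsMeagre (A ×ˢ B) := by
  obtain ⟨U, hU, hUne, -, hUA⟩ :=
    hA.exists_isOpen_isMeagre_diff isOpen_univ (by rwa [univ_inter])
  obtain ⟨V, hV, hVne, -, hVB⟩ :=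
    hB.exists_isOpen_isMeagre_diff isOpen_univ (by rwa [univ_inter])
  have hUA' : IsMeagre (Prod.fst ⁻¹' (U \ A) : Set (α × β)) :=
    hUA.preimage_of_isOpenMap continuous_fst isOpenMap_fst
  have hVB' : IsMeagre (Prod.snd ⁻¹' (V \ B) : Set (α × β)) :=
    hVB.preimage_of_isOpenMap continuous_snd isOpenMap_snd
  refine fun hAB => not_isMeagre_of_isOpen (hU.prod hV) (hUne.prod hVne)
    (((hUA'.union hVB').union hAB).mono ?_)
  rintro ⟨x, y⟩ ⟨hxU, hyV⟩
  by_cases hxA : x ∈ A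
  · by_cases hyB : y ∈ B
    exacts [Or.inr ⟨hxA, hyB⟩, Or.inl (Or.inr ⟨hyV, hyB⟩)]
  · exact Or.inl (Or.inl ⟨hxU, hxA⟩)

theorem Homeomorph.isMeagre_preimage (h : α ≃ₜ β) {s : Set β} :
    IsMeagre (h ⁻¹' s) ↔ IsMeagre s := by
  refine ⟨fun hs => ?_, fun hs => hs.preimage_of_isOpenMap h.continuous h.isOpenMap⟩
  have := hs.preimage_of_isOpenMap h.symm.continuous h.symm.isOpenMap
  rwa [← preimage_comp, h.self_comp_symm, preimage_id] at this

end Meagre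

section CategoryQuantifier

variable {Z Y : Type*} [TopologicalSpace Z] [BaireSpace Z] [SecondCountableTopology Z]
  [MeasurableSpace Z] [BorelSpace Z] [MeasurableSpace Y]

theorem measurableSet_setOf_not_isMeagre_inter {E : Set (Z × Y)} (hE : MeasurableSet E)
    {V : Set Z} (hV : IsOpen V) : MeasurableSet {y | ¬ IsMeagre (V ∩ {z | (z, y) ∈ E})} := by
  obtain ⟨b, hbc, -, hb⟩ := exists_countable_basis Z
  induction E, hE using MeasurableSpace.induction_on_inter generateFrom_prod.symm isPiSystem_prod
    generalizing V with
  | empty => simp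
  | basic t ht =>
    obtain ⟨A, -, B, hB, rfl⟩ := ht
    have : {y | ¬ IsMeagre (V ∩ {z | (z, y) ∈ A ×ˢ B})} = B ∩ {_y | ¬ IsMeagre (V ∩ A)} := by
      ext y
      by_cases hy : y ∈ B <;> simp [hy, IsMeagre.empty]
    rw [this]
    exact hB.inter (.const _)
  | compl t ht ih =>
    have : {y | ¬ IsMeagre (V ∩ {z | (z, y) ∈ tᶜ})} =
        ⋃ W ∈ {W ∈ b | W.Nonempty ∧ W ⊆ V}, {y | ¬ IsMeagre (W ∩ {z | (z, y) ∈ t})}ᶜ := by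
      ext y
      have hsec : BaireMeasurableSet {z | (z, y) ∈ t}ᶜ :=
        (measurable_prodMk_right ht).baireMeasurableSet.compl
      simp only [mem_ofPred_eq, mem_compl_iff, not_not, mem_iUnion, exists_prop, and_assoc]
      exact (hsec.not_isMeagre_inter_iff hb hV).trans (by simp only [sdiff_compl])
    rw [this]
    exact .biUnion (hbc.mono fun W hW => hW.1) fun W hW => (ih (hb.isOpen hW.1)).compl
  | iUnion f _ _ ih =>
    have : {y | ¬ IsMeagre (V ∩ {z | (z, y) ∈ ⋃ i, f i})} =
        ⋃ i, {y | ¬ IsMeagre (V ∩ {z | (z, y) ∈ f i})} := by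
      ext y
      simp only [mem_iUnion, ofPred_exists, inter_iUnion, isMeagre_iUnion_iff, not_forall,
        mem_ofPred_eq]
    rw [this]
    exact .iUnion fun i => ih i hV

theorem measurableSet_setOf_not_isMeagre {E : Set (Z × Y)} (hE : MeasurableSet E) :
    MeasurableSet {y | ¬ IsMeagre {z | (z, y) ∈ E}} := by
  simpa using measurableSet_setOf_not_isMeagre_inter hE isOpen_univ

end CategoryQuantifier

section OrbitRelation

variable {G X : Type*} [Group G] [MulAction G X] {F : Set (X × X)}

theorem exists_smul_eq_of_smul_mem (hFsub : ∀ p ∈ F, ∃ g : G, g • p.1 = p.2) {a b : G} {x y : X}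
    (h : (a • x, b • y) ∈ F) : ∃ g : G, g • x = y := by
  obtain ⟨g, hg⟩ : ∃ g : G, g • a • x = b • y := hFsub _ h
  exact ⟨b⁻¹ * g * a, by rw [mul_smul, mul_smul, hg, inv_smul_smul]⟩

theorem not_isMeagre_setOf_smul_mem_of_smul_eq [TopologicalSpace G] [ContinuousMul G]
    [BaireSpace G] [BaireSpace (G × G)] [MeasurableSpace G] [BorelSpace G] [TopologicalSpace X]
    [ContinuousSMul G X] [MeasurableSpace X] [BorelSpace X] (hF : MeasurableSet F)
    (hsymm : ∀ x y : X, (x, y) ∈ F → (y, x) ∈ F)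
    (htrans : ∀ x y z : X, (x, y) ∈ F → (y, z) ∈ F → (x, z) ∈ F)
    {x : X} {S : Set X} (hS : S.Countable) (hcover : ∀ a : G, ∃ w ∈ S, (a • x, w) ∈ F)
    {g : G} {y : X} (hg : g • x = y) :
    ¬ IsMeagre {c : G × G | (c.1 • x, c.2 • y) ∈ F} := by
  have hsec (v w : X) : BaireMeasurableSet {a : G | (a • v, w) ∈ F} :=
    ((continuous_id.smul continuous_const).measurable.prodMk measurable_const
      hF).baireMeasurableSet
  obtain ⟨w, -, hw⟩ : ∃ w ∈ S, ¬ IsMeagre {a : G | (a • x, w) ∈ F} := by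
    by_contra! h
    refine not_isMeagre_of_isOpen isOpen_univ univ_nonempty ((isMeagre_biUnion hS h).mono ?_)
    intro a _
    obtain ⟨w, hwS, haw⟩ := hcover a
    exact mem_biUnion hwS haw
  have hB : {b : G | (b • y, w) ∈ F} = Homeomorph.mulRight g ⁻¹' {a : G | (a • x, w) ∈ F} := by
    ext b
    simp [mul_smul, hg]
  refine fun h => (hsec x w).not_isMeagre_prod (hsec y w) hw ?_ (h.mono ?_)
  · rwa [hB, Homeomorph.isMeagre_preimage]
  · rintro ⟨a, b⟩ ⟨ha, hb⟩
    exact htrans _ _ _ ha (hsymm _ _ hb)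

end OrbitRelation

theorem stmt10_general {G X : Type*} [Group G] [TopologicalSpace G] [IsTopologicalGroup G]
    [PolishSpace G] [TopologicalSpace X] [MulAction G X]
    [ContinuousSMul G X] [MeasurableSpace X] [BorelSpace X]
    (F : Set (X × X)) (hFBorel : MeasurableSet F)
    (hFsymm : ∀ x y : X, (x, y) ∈ F → (y, x) ∈ F)
    (hFtrans : ∀ x y z : X, (x, y) ∈ F → (y, z) ∈ F → (x, z) ∈ F)
    (hFsub : ∀ p ∈ F, ∃ g : G, g • p.1 = p.2)
    (hcount : ∀ x : X, ∃ S : Set X, S.Countable ∧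
      ∀ y : X, (∃ g : G, g • x = y) → ∃ z ∈ S, (y, z) ∈ F) :
    MeasurableSet {p : X × X | ∃ g : G, g • p.1 = p.2} := by
  borelize G
  have hE : MeasurableSet {q : (G × G) × (X × X) | (q.1.1 • q.2.1, q.1.2 • q.2.2) ∈ F} :=
    hFBorel.preimage (by fun_prop)
  convert measurableSet_setOf_not_isMeagre hE using 1
  ext ⟨x, y⟩
  constructor
  · rintro ⟨g, hg⟩
    obtain ⟨S, hS, hSF⟩ := hcount x
    exact not_isMeagre_setOf_smul_mem_of_smul_eq hFBorel hFsymm hFtrans hS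
      (fun a => hSF _ ⟨a, rfl⟩) hg
  · intro h
    obtain ⟨⟨a, b⟩, hab⟩ := nonempty_of_not_isMeagre h
    exact exists_smul_eq_of_smul_mem hFsub hab

/-- Proposition 3 of the paper: if a Borel equivalence relation `F` contained in the
orbit equivalence relation has at most countably many classes in each orbit, then
the orbit equivalence relation is Borel. -/
theorem stmt10 {G X : Type*} [Group G] [TopologicalSpace G] [IsTopologicalGroup G]
    [PolishSpace G] [TopologicalSpace X] [PolishSpace X] [MulAction G X]
    [ContinuousSMul G X] [MeasurableSpace X] [BorelSpace X]
    (F : Set (X × X)) (hFBorel : MeasurableSet F)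
    (hFrefl : ∀ x : X, (x, x) ∈ F)
    (hFsymm : ∀ x y : X, (x, y) ∈ F → (y, x) ∈ F)
    (hFtrans : ∀ x y z : X, (x, y) ∈ F → (y, z) ∈ F → (x, z) ∈ F)
    (hFsub : ∀ p ∈ F, ∃ g : G, g • p.1 = p.2)
    (hcount : ∀ x : X, ∃ S : Set X, S.Countable ∧
      ∀ y : X, (∃ g : G, g • x = y) → ∃ z ∈ S, (y, z) ∈ F) :
    MeasurableSet {p : X × X | ∃ g : G, g • p.1 = p.2} :=
  stmt10_general F hFBorel hFsymm hFtrans hFsub hcount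
end

section
/- Let G be a Polish group acting continuously on a Polish space X, let F ⊆ E^X_G be a Borel equivalence relation, and let (V_n) be a neighbourhood basis at 1_G of symmetric open sets with V_{n+1}·V_{n+1} ⊆ V_n. Define C = {x ∈ X : ∃n ∀* g ∈ V_n, (x, g·x) ∈ F}. Then for every x ∈ C, witnessed by n, and every g ∈ V_{n+1} with g·x ∈ C, we have (x, g·x) ∈ F. -/
/-!
Right translation by `g` carries the comeager set `{h ∈ Vₙ | (x, h·x) ∈ F}` into a set that is
comeager in `V_{n+1}`, since `V_{n+1}·g ⊆ Vₙ`. Together with a comeager set of `h ∈ Vₘ` with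
`(g·x, h·g·x) ∈ F`, Baire category in the nonempty open set `V_{n+1} ∩ Vₘ` gives a common `h`,
and `x F h·g·x F g·x`.
-/

open Set

theorem isMeagre_inter_diff_inter {α : Type*} [TopologicalSpace α] {U V A B : Set α}
    (hA : IsMeagre (U \ A)) (hB : IsMeagre (V \ B)) : IsMeagre ((U ∩ V) \ (A ∩ B)) :=
  (hA.union hB).mono fun x ⟨⟨hU, hV⟩, hAB⟩ => by
    by_cases hx : x ∈ A
    · exact Or.inr ⟨hV, fun hx' => hAB ⟨hx, hx'⟩⟩
    · exact Or.inl ⟨hU, hx⟩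

theorem nonempty_inter_of_isMeagre_diff {α : Type*} [TopologicalSpace α] [BaireSpace α]
    {U A : Set α} (hU : IsOpen U) (hne : U.Nonempty) (h : IsMeagre (U \ A)) :
    (U ∩ A).Nonempty :=
  nonempty_of_not_isMeagre fun h' =>
    not_isMeagre_of_isOpen hU hne (sdiff_union_inter U A ▸ h.union h')

theorem IsMeagre.preimage_mul_right {G : Type*} [Group G] [TopologicalSpace G] [ContinuousMul G]
    {s : Set G} (hs : IsMeagre s) (g : G) : IsMeagre ((· * g) ⁻¹' s) :=
  hs.preimage_of_isOpenMap (continuous_mul_const g) (Homeomorph.mulRight g).isOpenMap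

theorem isMeagre_diff_preimage_mul_right {G : Type*} [Group G] [TopologicalSpace G]
    [ContinuousMul G] {U W S : Set G} {g : G} (hUW : ∀ h ∈ U, h * g ∈ W)
    (hS : IsMeagre (W \ S)) : IsMeagre (U \ (· * g) ⁻¹' S) :=
  (hS.preimage_mul_right g).mono fun h hh => show h * g ∈ W \ S from ⟨hUW h hh.1, hh.2⟩

theorem stmt15_general {G X : Type*} [Group G] [TopologicalSpace G] [IsTopologicalGroup G]
    [PolishSpace G] [MulAction G X]
    (V : ℕ → Set G) (hVopen : ∀ n, IsOpen (V n)) (hV1 : ∀ n, (1 : G) ∈ V n)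
    (hVsq : ∀ n, ∀ g ∈ V (n + 1), ∀ h ∈ V (n + 1), g * h ∈ V n)
    (F : Set (X × X))
    (hFsymm : ∀ x y : X, (x, y) ∈ F → (y, x) ∈ F)
    (hFtrans : ∀ x y z : X, (x, y) ∈ F → (y, z) ∈ F → (x, z) ∈ F) :
    ∀ (x : X) (n : ℕ), IsMeagre (V n \ {g : G | (x, g • x) ∈ F}) →
      ∀ g ∈ V (n + 1),
        g • x ∈ {z : X | ∃ m, IsMeagre (V m \ {h : G | (z, h • z) ∈ F})} →
        (x, g • x) ∈ F := by
  rintro x n hx g hg ⟨m, hgx⟩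
  have hx' : IsMeagre (V (n + 1) \ (· * g) ⁻¹' {h : G | (x, h • x) ∈ F}) :=
    isMeagre_diff_preimage_mul_right (fun h hh => hVsq n h hh g hg) hx
  obtain ⟨h, -, hxh, hgxh⟩ :=
    nonempty_inter_of_isMeagre_diff ((hVopen _).inter (hVopen m)) ⟨1, hV1 _, hV1 m⟩
      (isMeagre_inter_diff_inter hx' hgx)
  have hxh' : (x, h • g • x) ∈ F := mul_smul h g x ▸ hxh
  exact hFtrans _ _ _ hxh' (hFsymm _ _ hgxh)

/-- Relative openness step in the proof of Proposition 2: with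
`C = {x | ∃ n, ∀* g ∈ Vₙ, (x, g·x) ∈ F}`, if `x ∈ C` witnessed by `n` and
`g ∈ V_{n+1}` with `g·x ∈ C`, then `(x, g·x) ∈ F`. -/
theorem stmt15 {G X : Type*} [Group G] [TopologicalSpace G] [IsTopologicalGroup G]
    [PolishSpace G] [TopologicalSpace X] [PolishSpace X] [MulAction G X]
    [ContinuousSMul G X] [MeasurableSpace X] [BorelSpace X]
    (V : ℕ → Set G) (hVopen : ∀ n, IsOpen (V n)) (hV1 : ∀ n, (1 : G) ∈ V n)
    (hVsym : ∀ n, (V n)⁻¹ = V n)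
    (hVbasis : ∀ W ∈ nhds (1 : G), ∃ n, V n ⊆ W)
    (hVsq : ∀ n, ∀ g ∈ V (n + 1), ∀ h ∈ V (n + 1), g * h ∈ V n)
    (F : Set (X × X)) (hFBorel : MeasurableSet F)
    (hFrefl : ∀ x : X, (x, x) ∈ F)
    (hFsymm : ∀ x y : X, (x, y) ∈ F → (y, x) ∈ F)
    (hFtrans : ∀ x y z : X, (x, y) ∈ F → (y, z) ∈ F → (x, z) ∈ F)
    (hFsub : ∀ p ∈ F, ∃ g : G, g • p.1 = p.2) :
    ∀ (x : X) (n : ℕ), IsMeagre (V n \ {g : G | (x, g • x) ∈ F}) →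
      ∀ g ∈ V (n + 1),
        g • x ∈ {z : X | ∃ m, IsMeagre (V m \ {h : G | (z, h • z) ∈ F})} →
        (x, g • x) ∈ F :=
  stmt15_general V hVopen hV1 hVsq F hFsymm hFtrans
end

section
/- Let G be a Polish group acting continuously on a Polish space X such that the orbit equivalence relation E^X_G is essentially countable. Then E^X_G is σ-lacunary: there exist sequences of Borel sets (B_n) in X and open neighbourhoods (V_n) of 1_G such that ⋃_n B_n is a Borel countable complete section of E^X_G and each B_n is V_n-lacunary (g·x = y with g ∈ V_n and x, y ∈ B_n implies x = y). -/
/-!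
Let `ψ : X → Y` reduce the orbit relation to a countable Borel equivalence relation. For an open
`u ⊆ G`, the stable locus `D_u` is the set of `x` such that `g • x` stays in the `ψ`-fibre of `x`
for comeager many `g ∈ u`. If `x` and `g • x` both lie in `D_u` and `g ∈ u⁻¹ u`, the two comeager
sets of returns meet in the nonempty open set `u ∩ u g⁻¹`, so `ψ (g • x) = ψ x`. Hence a subset
of `D_u` meeting each fibre at most once is `u⁻¹ u`-lacunary.

Such a selector is obtained by a greedy descent through shrinking basic balls of a complete metric,
keeping at each step non-meagre many `g` with `g • x` in the current ball and in `D_u`. The descent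
only depends on the fibre of `x`, so it singles out one point per fibre; it is Borel because
comeagerness of the sections of a Borel set is a Borel condition (Montgomery), once the Polish
topology is refined so that `ψ` is continuous and the `D_u` are closed. As an orbit meets only
countably many fibres, some `{g | ψ (g • x) = y}` is non-meagre, which gives a basic `u` for
which the orbit meets `D_u` largely: the selectors cover every orbit, countably many points in
each.
-/

open Set Topology TopologicalSpace
open scoped Pointwise

namespace OrbitEquivalence

section Category

variable {G : Type*} [TopologicalSpace G]

def ComeagerIn (u s : Set G) : Prop := IsMeagre (u \ s)

variable {u v s t : Set G}

lemma ComeagerIn.mono_left (h : ComeagerIn u s) (hv : v ⊆ u) : ComeagerIn v s :=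
  h.mono (sdiff_subset_sdiff_left hv)

lemma ComeagerIn.mono_right (h : ComeagerIn u s) (hst : s ⊆ t) : ComeagerIn u t :=
  h.mono (sdiff_subset_sdiff_right hst)

lemma ComeagerIn.inter (hs : ComeagerIn u s) (ht : ComeagerIn u t) : ComeagerIn u (s ∩ t) := by
  rw [ComeagerIn, sdiff_inter]
  exact hs.union ht

lemma comeagerIn_iInter_iff {ι : Sort*} [Countable ι] {s : ι → Set G} :
    ComeagerIn u (⋂ i, s i) ↔ ∀ i, ComeagerIn u (s i) := by
  refine ⟨fun h i => h.mono_right (iInter_subset _ i), fun h => ?_⟩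
  rw [ComeagerIn, sdiff_iInter]
  exact isMeagre_iUnion h

lemma ComeagerIn.not_isMeagre_inter [BaireSpace G] (h : ComeagerIn u s) (hu : IsOpen u)
    (hne : u.Nonempty) : ¬ IsMeagre (u ∩ s) := fun hs =>
  not_isMeagre_of_isOpen hu hne ((h.union hs).mono fun x hx => by
    by_cases hxs : x ∈ s
    exacts [Or.inr ⟨hx, hxs⟩, Or.inl ⟨hx, hxs⟩])

lemma ComeagerIn.not_isMeagre [BaireSpace G] (h : ComeagerIn u s) (hu : IsOpen u)
    (hne : u.Nonempty) : ¬ IsMeagre s := fun hs =>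
  h.not_isMeagre_inter hu hne (hs.mono inter_subset_right)

lemma ComeagerIn.nonempty_inter [BaireSpace G] (h : ComeagerIn u s) (hu : IsOpen u)
    (hne : u.Nonempty) : (u ∩ s).Nonempty :=
  nonempty_of_not_isMeagre (h.not_isMeagre_inter hu hne)

lemma _root_.BaireMeasurableSet.exists_comeagerIn (hs : BaireMeasurableSet s) (hne : ¬ IsMeagre s) :
    ∃ u, IsOpen u ∧ u.Nonempty ∧ ComeagerIn u s := by
  obtain ⟨u, hu, hsu⟩ := hs.residualEq_isOpen
  have hdiff : IsMeagre {x | ¬ (x ∈ s ↔ x ∈ u)} := by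
    rw [IsMeagre, compl_ofPred]
    simp only [not_not]
    exact Filter.eventuallyEq_set.1 hsu
  refine ⟨u, hu, ?_, hdiff.mono fun x hx => by simp [hx.1, hx.2]⟩
  refine nonempty_iff_ne_empty.2 fun hue => hne (hdiff.mono fun x hx => ?_)
  simp [hue, hx]

lemma _root_.BaireMeasurableSet.exists_mem_basis_comeagerIn {B : Set (Set G)}
    (hB : IsTopologicalBasis B) (hs : BaireMeasurableSet s) (hne : ¬ IsMeagre s) :
    ∃ v ∈ B, v.Nonempty ∧ ComeagerIn v s := by
  obtain ⟨u, hu, ⟨x, hx⟩, hus⟩ := hs.exists_comeagerIn hne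
  obtain ⟨v, hvB, hxv, hvu⟩ := hB.exists_subset_of_mem_open hx hu
  exact ⟨v, hvB, ⟨x, hxv⟩, hus.mono_left hvu⟩

lemma comeagerIn_iff_forall_not_comeagerIn_compl [BaireSpace G] {B : Set (Set G)}
    (hB : IsTopologicalBasis B) (hB₀ : ∅ ∉ B) (hs : BaireMeasurableSet s) (hu : IsOpen u) :
    ComeagerIn u s ↔ ∀ v ∈ B, v ⊆ u → ¬ ComeagerIn v sᶜ := by
  have hne : ∀ v ∈ B, v.Nonempty := fun v hv =>
    nonempty_iff_ne_empty.2 fun h => hB₀ (h ▸ hv)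
  refine ⟨fun h v hvB hvu hv => ?_, fun h => ?_⟩
  · have hv' : ComeagerIn v (s ∩ sᶜ) := (h.mono_left hvu).inter hv
    rw [inter_compl_self] at hv'
    exact hv'.not_isMeagre (hB.isOpen hvB) (hne v hvB) IsMeagre.empty
  · by_contra hus
    obtain ⟨w, hw, hwne, hwus⟩ :=
      (hu.baireMeasurableSet.diff hs).exists_comeagerIn hus
    obtain ⟨x, hxw, hxu, -⟩ := hwus.nonempty_inter hw hwne
    obtain ⟨v, hvB, hxv, hvwu⟩ := hB.exists_subset_of_mem_open (show x ∈ w ∩ u from ⟨hxw, hxu⟩)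
      (hw.inter hu)
    exact h v hvB (hvwu.trans inter_subset_right)
      ((hwus.mono_left (hvwu.trans inter_subset_left)).mono_right (sdiff_subset_compl _ _))

end Category

section Montgomery

variable {Z G : Type*} [MeasurableSpace Z]

lemma measurableSet_setOf_preimage_prod {s : Set Z} (hs : MeasurableSet s) (t : Set G)
    (Q : Set G → Prop) : MeasurableSet {z | Q (Prod.mk z ⁻¹' s ×ˢ t)} := by
  have : {z | Q (Prod.mk z ⁻¹' s ×ˢ t)} = s ∩ {_z | Q t} ∪ sᶜ ∩ {_z | Q ∅} := by
    ext z
    by_cases hz : z ∈ s <;> simp [hz, mk_preimage_prod_right, mk_preimage_prod_right_eq_empty]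
  rw [this]
  exact (hs.inter (.const _)).union (hs.compl.inter (.const _))

variable [TopologicalSpace G] [MeasurableSpace G] [BorelSpace G] [SecondCountableTopology G]
  [BaireSpace G]

theorem measurableSet_setOf_comeagerIn {A : Set (Z × G)} (hA : MeasurableSet A) {u : Set G}
    (hu : IsOpen u) : MeasurableSet {z | ComeagerIn u (Prod.mk z ⁻¹' A)} := by
  obtain ⟨B, hBc, hB₀, hB⟩ := exists_countable_basis G
  suffices ∀ A (_ : MeasurableSet A), ∀ u : Set G, IsOpen u →
      MeasurableSet {z | ComeagerIn u (Prod.mk z ⁻¹' A)} ∧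
        MeasurableSet {z | ComeagerIn u (Prod.mk z ⁻¹' A)ᶜ} from (this A hA u hu).1
  -- The claims for `A` and `Aᶜ` are carried together: in the union step, `⋃ i, s i` is comeager
  -- in `u` iff no basic `v ⊆ u` has every `(s i)ᶜ` comeager in it.
  refine MeasurableSpace.induction_on_inter (C := fun A _ => ∀ u : Set G, IsOpen u →
      MeasurableSet {z | ComeagerIn u (Prod.mk z ⁻¹' A)} ∧
        MeasurableSet {z | ComeagerIn u (Prod.mk z ⁻¹' A)ᶜ})
    generateFrom_prod.symm isPiSystem_prod ?_ ?_ ?_ ?_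
  · simp only [preimage_empty]
    exact fun u _ => ⟨.const _, .const _⟩
  · rintro _ ⟨s, hs, t, -, rfl⟩ u -
    exact ⟨measurableSet_setOf_preimage_prod hs t _,
      measurableSet_setOf_preimage_prod hs t fun S => ComeagerIn u Sᶜ⟩
  · intro t _ ih u hu
    simp only [preimage_compl, compl_compl]
    exact (ih u hu).symm
  · intro f _ hf ih u hu
    simp only [preimage_iUnion, compl_iUnion, comeagerIn_iInter_iff, ofPred_forall]
    refine ⟨?_, .iInter fun i => (ih i u hu).2⟩
    have hBM : ∀ z, BaireMeasurableSet (⋃ i, Prod.mk z ⁻¹' f i) := fun z =>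
      .iUnion fun i => (measurable_prodMk_left (hf i)).baireMeasurableSet
    have : {z | ComeagerIn u (⋃ i, Prod.mk z ⁻¹' f i)} =
        ⋂ v ∈ {v ∈ B | v ⊆ u}, ⋃ i, {z | ComeagerIn v (Prod.mk z ⁻¹' f i)ᶜ}ᶜ := by
      ext z
      simp [comeagerIn_iff_forall_not_comeagerIn_compl hB hB₀ (hBM z) hu, compl_iUnion,
        comeagerIn_iInter_iff]
    rw [this]
    exact .biInter (hBc.mono (sep_subset _ _)) fun v hv =>
      .iUnion fun i => (ih i v (hB.isOpen hv.1)).2.compl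

theorem measurableSet_setOf_not_isMeagre {A : Set (Z × G)} (hA : MeasurableSet A) :
    MeasurableSet {z | ¬ IsMeagre (Prod.mk z ⁻¹' A)} := by
  obtain ⟨B, hBc, -, hB⟩ := exists_countable_basis G
  have : {z | ¬ IsMeagre (Prod.mk z ⁻¹' A)} =
      ⋃ v ∈ {v ∈ B | v.Nonempty}, {z | ComeagerIn v (Prod.mk z ⁻¹' A)} := by
    ext z
    simp only [mem_ofPred_eq, mem_iUnion, exists_prop]
    refine ⟨fun h => ?_, fun ⟨v, ⟨hvB, hv⟩, hz⟩ => hz.not_isMeagre (hB.isOpen hvB) hv⟩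
    obtain ⟨v, hvB, hv, hz⟩ :=
      (measurable_prodMk_left hA).baireMeasurableSet.exists_mem_basis_comeagerIn hB h
    exact ⟨v, ⟨hvB, hv⟩, hz⟩
  rw [this]
  exact .biUnion (hBc.mono (sep_subset _ _)) fun v hv =>
    measurableSet_setOf_comeagerIn hA (hB.isOpen hv.1)

end Montgomery

section Translation

variable {G : Type*} [TopologicalSpace G] [Group G] [SeparatelyContinuousMul G]

lemma isMeagre_preimage_mul_right (g : G) {s : Set G} :
    IsMeagre ((· * g) ⁻¹' s) ↔ IsMeagre s := by
  have key : ∀ (h : G) {t : Set G}, IsMeagre t → IsMeagre ((· * h) ⁻¹' t) := fun h _ ht =>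
    ht.preimage_of_isOpenMap (Homeomorph.mulRight h).continuous (Homeomorph.mulRight h).isOpenMap
  refine ⟨fun hs => ?_, key g⟩
  simpa [preimage_preimage] using key g⁻¹ hs

lemma comeagerIn_preimage_mul_right_iff (g : G) {u s : Set G} :
    ComeagerIn u ((· * g) ⁻¹' s) ↔ ComeagerIn ((· * g⁻¹) ⁻¹' u) s := by
  rw [ComeagerIn, ComeagerIn]
  conv_rhs => rw [← isMeagre_preimage_mul_right g, preimage_sdiff, preimage_preimage]
  simp

end Translation

section Returns

variable {G X Y : Type*} [Group G] [MulAction G X] {ψ : X → Y}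

variable (G) in
def returnSet (ψ : X → Y) (x : X) : Set G := {g | ψ (g • x) = ψ x}

lemma returnSet_smul {x : X} {h : G} (hψ : ψ (h • x) = ψ x) :
    returnSet G ψ (h • x) = (· * h) ⁻¹' returnSet G ψ x := by
  ext g
  simp [returnSet, mul_smul, hψ]

variable [TopologicalSpace G]

def stableLocus (ψ : X → Y) (u : Set G) : Set X := {x | ComeagerIn u (returnSet G ψ x)}

variable (G) in
def IsLarge (ψ : X → Y) (S : Set X) (x : X) : Prop :=
  ¬ IsMeagre ((· • x) ⁻¹' S ∩ returnSet G ψ x)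

lemma isLarge_smul_iff [SeparatelyContinuousMul G] {S : Set X} {x : X} {h : G}
    (hψ : ψ (h • x) = ψ x) : IsLarge G ψ S (h • x) ↔ IsLarge G ψ S x := by
  rw [IsLarge, IsLarge, returnSet_smul hψ]
  conv_rhs => rw [← isMeagre_preimage_mul_right h, preimage_inter, preimage_preimage]
  simp [mul_smul]

lemma isLarge_congr [SeparatelyContinuousMul G] (horb : ∀ a b, ψ a = ψ b → ∃ g : G, g • a = b)
    {S : Set X} {x x' : X} (hψ : ψ x' = ψ x) : IsLarge G ψ S x' ↔ IsLarge G ψ S x := by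
  obtain ⟨h, rfl⟩ := horb x x' hψ.symm
  exact isLarge_smul_iff hψ

variable [IsTopologicalGroup G] [BaireSpace G]

theorem map_smul_eq_of_mem_stableLocus {u : Set G} (hu : IsOpen u) {x : X} {g : G}
    (hx : x ∈ stableLocus ψ u) (hgx : g • x ∈ stableLocus ψ u) (hg : g ∈ u⁻¹ * u) :
    ψ (g • x) = ψ x := by
  have hK : ComeagerIn ((· * g⁻¹) ⁻¹' u) {k : G | ψ (k • x) = ψ (g • x)} := by
    rw [← comeagerIn_preimage_mul_right_iff]
    simpa [stableLocus, returnSet, mul_smul] using hgx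
  have hne : (u ∩ (· * g⁻¹) ⁻¹' u).Nonempty := by
    obtain ⟨a, ha, b, hb, rfl⟩ := hg
    exact ⟨b, hb, by simpa using ha⟩
  obtain ⟨k, -, hk, hkg⟩ := ((hx.mono_left inter_subset_left).inter
    (hK.mono_left inter_subset_right)).nonempty_inter
    (hu.inter (hu.preimage (continuous_mul_const _))) hne
  exact hkg.symm.trans hk

theorem exists_comeagerIn_returnSet_smul {x : X} (hcnt : (ψ '' MulAction.orbit G x).Countable)
    (hmeas : ∀ y, BaireMeasurableSet {g : G | ψ (g • x) = y}) :
    ∃ g : G, ∃ u : Set G, IsOpen u ∧ 1 ∈ u ∧ ComeagerIn u (returnSet G ψ (g • x)) := by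
  have hcover : (univ : Set G) = ⋃ y ∈ ψ '' MulAction.orbit G x, {g : G | ψ (g • x) = y} := by
    ext g
    simpa using ⟨g • x, MulAction.mem_orbit x g, rfl⟩
  obtain ⟨y, -, hy⟩ := exists_of_not_isMeagre_biUnion hcnt
    (hcover ▸ not_isMeagre_of_isOpen isOpen_univ univ_nonempty)
  obtain ⟨u, hu, hune, huy⟩ := (hmeas y).exists_comeagerIn hy
  obtain ⟨g, hgu, hgy : ψ (g • x) = y⟩ := huy.nonempty_inter hu hune
  have hret : returnSet G ψ (g • x) = (· * g) ⁻¹' {k | ψ (k • x) = y} := by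
    ext k
    simp [returnSet, mul_smul, hgy]
  refine ⟨g, (· * g) ⁻¹' u, hu.preimage (continuous_mul_const _), by simpa using hgu, ?_⟩
  rw [hret, comeagerIn_preimage_mul_right_iff, preimage_preimage]
  simpa using huy

theorem exists_isLarge_stableLocus {U : ℕ → Set G} (hU : IsTopologicalBasis (range U))
    {u : Set G} (hu : IsOpen u) (h1 : (1 : G) ∈ u) {z : X}
    (hz : ComeagerIn u (returnSet G ψ z)) : ∃ m, IsLarge G ψ (stableLocus ψ (U m)) z := by
  obtain ⟨V, hV, hV1, hVV⟩ := exists_open_nhds_one_mul_subset (hu.mem_nhds h1)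
  obtain ⟨_, ⟨m, rfl⟩, -, hmV⟩ := hU.exists_subset_of_mem_open hV1 hV
  have hVu : V ⊆ u := fun v hv => hVV (by simpa using mul_mem_mul hv hV1)
  refine ⟨m, fun hmeagre => (hz.mono_left hVu).not_isMeagre_inter hV ⟨1, hV1⟩ (hmeagre.mono ?_)⟩
  rintro g ⟨hgV, hg⟩
  refine ⟨?_, hg⟩
  change ComeagerIn (U m) (returnSet G ψ (g • z))
  rw [returnSet_smul hg, comeagerIn_preimage_mul_right_iff]
  exact hz.mono_left fun k hk => by simpa using hVV (mul_mem_mul (hmV hk) hgV)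

end Returns

section Selector

lemma _root_.TopologicalSpace.IsTopologicalBasis.exists_closure_subset_diam_le {X : Type*}
    [PseudoMetricSpace X] {B : Set (Set X)} (hB : IsTopologicalBasis B) {A : Set X}
    (hA : IsOpen A) {z : X} (hz : z ∈ A) {ε : ℝ} (hε : 0 < ε) :
    ∃ w ∈ B, z ∈ w ∧ closure w ⊆ A ∧ Bornology.IsBounded w ∧ Metric.diam w ≤ ε := by
  obtain ⟨δ, hδ, hδA⟩ := Metric.isOpen_iff.1 hA z hz
  have hr : 0 < min (δ / 2) (ε / 2) := by positivity
  obtain ⟨w, hwB, hzw, hwr⟩ :=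
    hB.exists_subset_of_mem_open (Metric.mem_ball_self hr) Metric.isOpen_ball
  refine ⟨w, hwB, hzw, ?_, Metric.isBounded_ball.subset hwr, ?_⟩
  · calc closure w ⊆ Metric.closedBall z (min (δ / 2) (ε / 2)) :=
          closure_minimal (hwr.trans Metric.ball_subset_closedBall) Metric.isClosed_closedBall
      _ ⊆ Metric.ball z δ :=
          Metric.closedBall_subset_ball (by linarith [min_le_left (δ / 2) (ε / 2)])
      _ ⊆ A := hδA
  · calc Metric.diam w ≤ Metric.diam (Metric.ball z (min (δ / 2) (ε / 2))) :=
          Metric.diam_mono hwr Metric.isBounded_ball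
      _ ≤ 2 * min (δ / 2) (ε / 2) := Metric.diam_ball hr.le
      _ ≤ ε := by linarith [min_le_right (δ / 2) (ε / 2)]

variable {G X Y : Type*} [Group G] [TopologicalSpace G] [MulAction G X] [MetricSpace X]
  {ψ : X → Y} {D : Set X} {W : ℕ → Set X}

def cell (W : ℕ → Set X) : List ℕ → Set X
  | [] => univ
  | j :: s => W j ∩ cell W s

def IsRefinement (W : ℕ → Set X) (s : List ℕ) (j : ℕ) : Prop :=
  closure (W j) ⊆ cell W s ∧ Bornology.IsBounded (W j) ∧
    Metric.diam (W j) ≤ (1 / 2) ^ s.length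

variable (G) in
def largeStep (ψ : X → Y) (D : Set X) (W : ℕ → Set X) (s : List ℕ) (j : ℕ) : Set X :=
  {x | IsRefinement W s j ∧ IsLarge G ψ (cell W (j :: s) ∩ D) x}

variable (G) in
/-- `x ∈ pathSet G ψ D W s` iff `s`, read from right to left, is the greedy path of `x`: each step
is the least index `j` for which `W j` refines the current cell and the new cell is large at `x`. -/
def pathSet (ψ : X → Y) (D : Set X) (W : ℕ → Set X) : List ℕ → Set X
  | [] => {x | IsLarge G ψ D x}
  | j :: s => pathSet ψ D W s ∩ largeStep G ψ D W s j ∩ ⋂ j' < j, (largeStep G ψ D W s j')ᶜ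

variable (G) in
def selector (ψ : X → Y) (D : Set X) (W : ℕ → Set X) : Set X :=
  D ∩ ⋂ n, ⋃ (s : List ℕ) (_ : s.length = n), pathSet G ψ D W s ∩ cell W s

lemma isOpen_cell (hW : ∀ j, IsOpen (W j)) : ∀ s, IsOpen (cell W s)
  | [] => isOpen_univ
  | j :: s => (hW j).inter (isOpen_cell hW s)

lemma mem_pathSet_cons {x : X} {j : ℕ} {s : List ℕ} :
    x ∈ pathSet G ψ D W (j :: s) ↔ x ∈ pathSet G ψ D W s ∧ x ∈ largeStep G ψ D W s j ∧
      ∀ j' < j, x ∉ largeStep G ψ D W s j' := by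
  simp [pathSet, and_assoc]

lemma mem_selector {z : X} : z ∈ selector G ψ D W ↔
    z ∈ D ∧ ∀ n, ∃ s : List ℕ, s.length = n ∧ z ∈ pathSet G ψ D W s ∧ z ∈ cell W s := by
  simp only [selector, mem_inter_iff, mem_iInter, mem_iUnion, exists_prop]

lemma selector_subset : selector G ψ D W ⊆ D := inter_subset_left

lemma isLarge_of_mem_pathSet {x : X} :
    ∀ {s : List ℕ}, x ∈ pathSet G ψ D W s → IsLarge G ψ (cell W s ∩ D) x
  | [], hx => by rw [cell, univ_inter]; exact hx
  | _ :: _, hx => (mem_pathSet_cons.1 hx).2.1.2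

lemma mem_pathSet_congr [SeparatelyContinuousMul G]
    (horb : ∀ a b, ψ a = ψ b → ∃ g : G, g • a = b) {x x' : X} (hψ : ψ x' = ψ x) :
    ∀ s, x' ∈ pathSet G ψ D W s ↔ x ∈ pathSet G ψ D W s
  | [] => isLarge_congr horb hψ
  | j :: s => by
    have hstep : ∀ j', x' ∈ largeStep G ψ D W s j' ↔ x ∈ largeStep G ψ D W s j' :=
      fun j' => and_congr_right' (isLarge_congr horb hψ)
    simp only [mem_pathSet_cons, mem_pathSet_congr horb hψ s, hstep]

lemma eq_of_mem_pathSet {x : X} : ∀ {s s' : List ℕ}, s.length = s'.length →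
    x ∈ pathSet G ψ D W s → x ∈ pathSet G ψ D W s' → s = s'
  | [], [], _, _, _ => rfl
  | j :: s, j' :: s', hlen, hx, hx' => by
    rw [mem_pathSet_cons] at hx hx'
    obtain rfl := eq_of_mem_pathSet (Nat.succ.inj hlen) hx.1 hx'.1
    obtain rfl : j = j' := le_antisymm (not_lt.1 fun h => hx.2.2 j' h hx'.2.1)
      (not_lt.1 fun h => hx'.2.2 j h hx.2.1)
    rfl

lemma exists_cons_mem_pathSet (hW : IsTopologicalBasis (range W)) {x : X} {s : List ℕ}
    (hx : x ∈ pathSet G ψ D W s) : ∃ j, x ∈ pathSet G ψ D W (j :: s) := by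
  classical
  have hstep : ∃ j, x ∈ largeStep G ψ D W s j := by
    by_contra! h
    refine isLarge_of_mem_pathSet hx ((isMeagre_iUnion fun j : {j // IsRefinement W s j} =>
      not_not.1 fun hj => h j ⟨j.2, hj⟩).mono ?_)
    rintro g ⟨⟨hgs, hgD⟩, hg⟩
    obtain ⟨_, ⟨j, rfl⟩, hgj, hj⟩ := hW.exists_closure_subset_diam_le
      (isOpen_cell (fun j => hW.isOpen (mem_range_self j)) s) hgs
      (by positivity : (0 : ℝ) < (1 / 2) ^ s.length)
    exact mem_iUnion.2 ⟨⟨j, hj⟩, ⟨⟨hgj, hgs⟩, hgD⟩, hg⟩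
  exact ⟨Nat.find hstep, mem_pathSet_cons.2 ⟨hx, Nat.find_spec hstep, fun j => Nat.find_min hstep⟩⟩

lemma eq_of_mem_selector [SeparatelyContinuousMul G]
    (horb : ∀ a b, ψ a = ψ b → ∃ g : G, g • a = b) {z z' : X} (hz : z ∈ selector G ψ D W)
    (hz' : z' ∈ selector G ψ D W) (hψ : ψ z' = ψ z) : z = z' := by
  rw [mem_selector] at hz hz'
  refine eq_of_forall_dist_le fun ε hε => ?_
  obtain ⟨n, hn⟩ := exists_pow_lt_of_lt_one hε (by norm_num : (1 / 2 : ℝ) < 1)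
  obtain ⟨s', hlen', hzs', hzc'⟩ := hz'.2 (n + 1)
  obtain ⟨_ | ⟨j, s⟩, hlen, hzs, hzc⟩ := hz.2 (n + 1)
  · simp at hlen
  obtain rfl := eq_of_mem_pathSet (hlen.trans hlen'.symm) hzs
    ((mem_pathSet_congr horb hψ _).1 hzs')
  have hj : IsRefinement W s j := (mem_pathSet_cons.1 hzs).2.1.1
  calc dist z z' ≤ Metric.diam (W j) := Metric.dist_le_diam_of_mem hj.2.1 hzc.1 hzc'.1
    _ ≤ (1 / 2) ^ n := by
      rw [List.length_cons, Nat.add_right_cancel_iff] at hlen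
      exact hlen ▸ hj.2.2
    _ ≤ ε := hn.le

lemma exists_seq_mem_pathSet (hW : IsTopologicalBasis (range W)) {x : X}
    (hx : x ∈ pathSet G ψ D W []) : ∃ (p : ℕ → List ℕ) (j : ℕ → ℕ),
      (∀ n, x ∈ pathSet G ψ D W (p n)) ∧ (∀ n, (p n).length = n) ∧ ∀ n, p (n + 1) = j n :: p n := by
  choose next hnext using fun s : {s // x ∈ pathSet G ψ D W s} => exists_cons_mem_pathSet hW s.2
  let q : ℕ → {s // x ∈ pathSet G ψ D W s} := fun n =>
    Nat.rec ⟨[], hx⟩ (fun _ s => ⟨next s :: s.1, hnext s⟩) n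
  refine ⟨fun n => (q n).1, fun n => next (q n), fun n => (q n).2, fun n => ?_, fun n => rfl⟩
  induction n with
  | zero => rfl
  | succ n ih =>
    change (next (q n) :: (q n).1).length = n + 1
    rw [List.length_cons, ih]

lemma exists_mem_selector [CompleteSpace X] [SeparatelyContinuousMul G] [TopologicalSpace Y]
    [T2Space Y] (hW : IsTopologicalBasis (range W)) (hD : IsClosed D) (hψ : Continuous ψ)
    (horb : ∀ a b, ψ a = ψ b → ∃ g : G, g • a = b) {x : X} (hx : IsLarge G ψ D x) :
    ∃ z ∈ selector G ψ D W, ψ z = ψ x := by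
  obtain ⟨p, j, hpx, hlen, hsucc⟩ := exists_seq_mem_pathSet hW hx
  have hj : ∀ n, IsRefinement W (p n) (j n) := fun n =>
    (mem_pathSet_cons.1 (hsucc n ▸ hpx (n + 1))).2.1.1
  have hanti : Antitone fun n => cell W (p n) :=
    antitone_nat_of_succ_le fun n => hsucc n ▸ inter_subset_right
  set K : ℕ → Set X := fun n => closure (W (j n)) ∩ D ∩ {z | ψ z = ψ x}
  have hK : (⋂ n, K n).Nonempty := by
    refine Metric.nonempty_iInter_of_nonempty_biInter
      (fun n => (isClosed_closure.inter hD).inter (isClosed_eq hψ continuous_const))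
      (fun n => (hj n).2.1.closure.subset (inter_subset_left.trans inter_subset_left))
      (fun N => ?_) ?_
    · obtain ⟨g, ⟨hgc, hgD⟩, hg⟩ := nonempty_of_not_isMeagre (isLarge_of_mem_pathSet (hpx (N + 1)))
      refine ⟨g • x, mem_iInter₂.2 fun n hn => ⟨⟨subset_closure ?_, hgD⟩, hg⟩⟩
      have : g • x ∈ cell W (p (n + 1)) := hanti (by omega) hgc
      rw [hsucc] at this
      exact this.1
    · refine squeeze_zero (fun n => Metric.diam_nonneg) (fun n => ?_)
        (tendsto_pow_atTop_nhds_zero_of_lt_one (by norm_num : (0 : ℝ) ≤ 1 / 2) (by norm_num))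
      calc Metric.diam (K n) ≤ Metric.diam (closure (W (j n))) :=
            Metric.diam_mono (inter_subset_left.trans inter_subset_left) (hj n).2.1.closure
        _ ≤ (1 / 2) ^ n := by
            rw [Metric.diam_closure]
            exact (hj n).2.2.trans_eq (by rw [hlen n])
  obtain ⟨z, hz⟩ := hK
  have hzK : ∀ n, z ∈ K n := mem_iInter.1 hz
  refine ⟨z, mem_selector.2 ⟨(hzK 0).1.2, fun n => ⟨p n, hlen n, ?_, (hj n).1 (hzK n).1.1⟩⟩,
    (hzK 0).2⟩
  exact (mem_pathSet_congr horb (hzK 0).2 _).2 (hpx n)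

end Selector

section Measurability

variable {G X Y : Type*} [Group G] [MulAction G X] [TopologicalSpace G] [MeasurableSpace G]
  [BorelSpace G] [SecondCountableTopology G] [BaireSpace G] [MeasurableSpace X] {ψ : X → Y}

lemma measurableSet_stableLocus (hact : Measurable fun p : X × G => p.2 • p.1)
    (hker : MeasurableSet {p : X × X | ψ p.1 = ψ p.2}) {u : Set G} (hu : IsOpen u) :
    MeasurableSet (stableLocus ψ u) :=
  measurableSet_setOf_comeagerIn ((hact.prodMk measurable_fst) hker) hu

lemma measurableSet_setOf_isLarge (hact : Measurable fun p : X × G => p.2 • p.1)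
    (hker : MeasurableSet {p : X × X | ψ p.1 = ψ p.2}) {S : Set X} (hS : MeasurableSet S) :
    MeasurableSet {x | IsLarge G ψ S x} :=
  measurableSet_setOf_not_isMeagre ((hact hS).inter ((hact.prodMk measurable_fst) hker))

variable [MetricSpace X] [OpensMeasurableSpace X] {D : Set X} {W : ℕ → Set X}

lemma measurableSet_pathSet (hact : Measurable fun p : X × G => p.2 • p.1)
    (hker : MeasurableSet {p : X × X | ψ p.1 = ψ p.2}) (hW : ∀ j, IsOpen (W j))
    (hD : MeasurableSet D) : ∀ s, MeasurableSet (pathSet G ψ D W s)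
  | [] => measurableSet_setOf_isLarge hact hker hD
  | j :: s => by
    have hstep : ∀ j', MeasurableSet (largeStep G ψ D W s j') := fun j' =>
      (MeasurableSet.const _).inter
        (measurableSet_setOf_isLarge hact hker ((isOpen_cell hW _).measurableSet.inter hD))
    exact ((measurableSet_pathSet hact hker hW hD s).inter (hstep j)).inter
      (.iInter fun j' => .iInter fun _ => (hstep j').compl)

lemma measurableSet_selector (hact : Measurable fun p : X × G => p.2 • p.1)
    (hker : MeasurableSet {p : X × X | ψ p.1 = ψ p.2}) (hW : ∀ j, IsOpen (W j))
    (hD : MeasurableSet D) : MeasurableSet (selector G ψ D W) :=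
  hD.inter <| .iInter fun _ => .iUnion fun s => .iUnion fun _ =>
    (measurableSet_pathSet hact hker hW hD s).inter (isOpen_cell hW s).measurableSet

end Measurability

lemma exists_nat_basis (X : Type*) [TopologicalSpace X] [SecondCountableTopology X]
    [Nonempty X] : ∃ U : ℕ → Set X, IsTopologicalBasis (range U) ∧ ∀ n, (U n).Nonempty := by
  obtain ⟨B, hBc, hB₀, hB⟩ := exists_countable_basis X
  obtain ⟨v, hvB, -⟩ := hB.exists_subset_of_mem_open (mem_univ (Classical.arbitrary X)) isOpen_univ
  obtain ⟨U, rfl⟩ := hBc.exists_eq_range ⟨v, hvB⟩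
  exact ⟨U, hB, fun n => nonempty_iff_ne_empty.2 fun h => hB₀ (h ▸ mem_range_self n)⟩

lemma exists_polishSpace_continuous_isClosed {X Y : Type*} [t : TopologicalSpace X]
    [PolishSpace X] [MeasurableSpace X] [BorelSpace X] [TopologicalSpace Y]
    [SecondCountableTopology Y] [MeasurableSpace Y] [OpensMeasurableSpace Y] {ψ : X → Y}
    (hψ : Measurable ψ) {D : ℕ → Set X} (hD : ∀ n, MeasurableSet (D n)) :
    ∃ t' : TopologicalSpace X, t' ≤ t ∧ @PolishSpace X t' ∧ @BorelSpace X t' _ ∧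
      Continuous[t', _] ψ ∧ ∀ n, IsClosed[t'] (D n) := by
  classical
  have hΦ : Measurable fun x => (ψ x, fun n => decide (x ∈ D n)) :=
    hψ.prodMk (measurable_pi_iff.2 fun n => measurable_to_countable' fun b => by
      change MeasurableSet {x | decide (x ∈ D n) = b}
      cases b
      · simp only [decide_eq_false_iff_not]
        exact (hD n).compl
      · simp only [decide_eq_true_iff]
        exact hD n)
  have hX : PolishSpace X := inferInstance
  have hborel : ‹MeasurableSpace X› = borel X := BorelSpace.measurable_eq
  obtain ⟨t', ht', hΦc, hP⟩ := hΦ.exists_continuous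
  refine ⟨t', ht', hP, ⟨?_⟩, continuous_fst.comp hΦc, fun n => ?_⟩
  · rw [hborel]
    exact (MeasureTheory.borel_eq_borel_of_le hP hX ht').symm
  · have : D n = (fun x => (ψ x, fun n => decide (x ∈ D n))) ⁻¹' {q | q.2 n = true} := by
      ext x
      simp
    rw [this]
    exact (isClosed_eq ((continuous_apply n).comp continuous_snd) continuous_const).preimage hΦc

def IsSigmaLacunary (G X : Type*) [Group G] [TopologicalSpace G] [MulAction G X]
    [MeasurableSpace X] : Prop :=
  ∃ (B : ℕ → Set X) (V : ℕ → Set G),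
    (∀ n, MeasurableSet (B n)) ∧
    (∀ n, IsOpen (V n) ∧ (1 : G) ∈ V n) ∧
    (∀ x : X, ∃ y ∈ ⋃ n, B n, ∃ g : G, g • y = x) ∧
    (∀ x : X, ((⋃ n, B n) ∩ {y : X | ∃ g : G, g • x = y}).Countable) ∧
    (∀ n, ∀ x ∈ B n, ∀ y ∈ B n, ∀ g ∈ V n, g • x = y → x = y)

/-- The lacunary pieces are selectors of the stable loci `stableLocus ψ (U n)`, with
`V n = (U n)⁻¹ * U n`. -/
theorem isSigmaLacunary_of_isClosed_stableLocus {G X Y : Type*} [Group G] [TopologicalSpace G]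
    [IsTopologicalGroup G] [SecondCountableTopology G] [BaireSpace G] [MeasurableSpace G]
    [BorelSpace G] [TopologicalSpace X] [PolishSpace X] [MeasurableSpace X] [BorelSpace X]
    [MulAction G X] [TopologicalSpace Y] [T2Space Y] {ψ : X → Y} (hψ : Continuous ψ)
    (hact : Measurable fun p : X × G => p.2 • p.1)
    (horb : ∀ a b, ψ a = ψ b → ∃ g : G, g • a = b)
    (hcnt : ∀ x, (ψ '' MulAction.orbit G x).Countable) {U : ℕ → Set G}
    (hU : IsTopologicalBasis (range U)) (hUne : ∀ n, (U n).Nonempty)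
    (hD : ∀ n, IsClosed (stableLocus ψ (U n))) : IsSigmaLacunary G X := by
  rcases isEmpty_or_nonempty X with hX | hX
  · exact ⟨fun _ => ∅, fun _ => univ, fun _ => .empty, fun _ => ⟨isOpen_univ, mem_univ _⟩,
      isEmptyElim, isEmptyElim, by simp⟩
  let _ := upgradeIsCompletelyMetrizable X
  obtain ⟨W, hW, -⟩ := exists_nat_basis X
  have hUo : ∀ n, IsOpen (U n) := fun n => hU.isOpen (mem_range_self n)
  have hker : MeasurableSet {p : X × X | ψ p.1 = ψ p.2} :=
    (isClosed_eq (hψ.comp continuous_fst) (hψ.comp continuous_snd)).measurableSet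
  have hinj : ∀ n, InjOn ψ (selector G ψ (stableLocus ψ (U n)) W) := fun n _ hz _ hz' h =>
    eq_of_mem_selector horb hz hz' h.symm
  refine ⟨fun n => selector G ψ (stableLocus ψ (U n)) W, fun n => (U n)⁻¹ * U n,
    fun n => ?_, fun n => ⟨(hUo n).mul_left, ?_⟩, fun x => ?_, fun x => ?_,
    fun n x hx y hy g hg hgxy => ?_⟩
  · exact measurableSet_selector hact hker (fun j => hW.isOpen (mem_range_self j))
      (measurableSet_stableLocus hact hker (hUo n))
  · rw [one_mem_inv_mul_iff, not_disjoint_iff_nonempty_inter, inter_self]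
    exact hUne n
  · have hfib : ∀ y, BaireMeasurableSet {g : G | ψ (g • x) = y} := fun y =>
      ((hact.comp (measurable_const.prodMk measurable_id))
        ((isClosed_singleton.preimage hψ).measurableSet)).baireMeasurableSet
    obtain ⟨g, u, hu, hu1, hgx⟩ := exists_comeagerIn_returnSet_smul (hcnt x) hfib
    obtain ⟨m, hm⟩ := exists_isLarge_stableLocus hU hu hu1 hgx
    obtain ⟨z, hz, hψz⟩ := exists_mem_selector hW (hD m) hψ horb hm
    obtain ⟨h, rfl⟩ := horb _ _ hψz.symm
    exact ⟨h • g • x, mem_iUnion.2 ⟨m, hz⟩, (h * g)⁻¹, by simp [mul_smul]⟩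
  · rw [iUnion_inter]
    exact countable_iUnion fun n => countable_of_injective_of_countable_image
      ((hinj n).mono inter_subset_left) ((hcnt x).mono (image_mono inter_subset_right))
  · subst hgxy
    exact hinj n hx hy (map_smul_eq_of_mem_stableLocus (hUo n) (selector_subset hx)
      (selector_subset hy) hg).symm

end OrbitEquivalence

open Set OrbitEquivalence

/-- Main theorem of the paper: every essentially countable orbit equivalence
relation induced by a continuous action of a Polish group on a Polish space is
σ-lacunary. -/
theorem stmt16 {G X : Type*} [Group G] [TopologicalSpace G] [IsTopologicalGroup G]
    [PolishSpace G] [TopologicalSpace X] [PolishSpace X] [MulAction G X]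
    [ContinuousSMul G X] [MeasurableSpace X] [BorelSpace X]
    (hEC : ∃ (Y : Type) (_ : TopologicalSpace Y) (_ : PolishSpace Y)
      (_ : MeasurableSpace Y) (_ : BorelSpace Y) (F : Set (Y × Y)),
      MeasurableSet F ∧
      (∀ y : Y, (y, y) ∈ F) ∧
      (∀ y z : Y, (y, z) ∈ F → (z, y) ∈ F) ∧
      (∀ y z w : Y, (y, z) ∈ F → (z, w) ∈ F → (y, w) ∈ F) ∧
      (∀ y : Y, {z : Y | (y, z) ∈ F}.Countable) ∧
      (∃ ψ : X → Y, Measurable ψ ∧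
        ∀ x x' : X, (∃ g : G, g • x = x') ↔ (ψ x, ψ x') ∈ F) ∧
      (∃ θ : Y → X, Measurable θ ∧
        ∀ y y' : Y, (y, y') ∈ F ↔ ∃ g : G, g • θ y = θ y')) :
    ∃ (B : ℕ → Set X) (V : ℕ → Set G),
      (∀ n, MeasurableSet (B n)) ∧
      (∀ n, IsOpen (V n) ∧ (1 : G) ∈ V n) ∧
      (∀ x : X, ∃ y ∈ ⋃ n, B n, ∃ g : G, g • y = x) ∧
      (∀ x : X, ((⋃ n, B n) ∩ {y : X | ∃ g : G, g • x = y}).Countable) ∧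
      (∀ n, ∀ x ∈ B n, ∀ y ∈ B n, ∀ g ∈ V n, g • x = y → x = y) := by
  obtain ⟨Y, _, _, _, _, F, -, hFrefl, -, -, hFcnt, ⟨ψ, hψ, hψF⟩, -⟩ := hEC
  have horb : ∀ a b : X, ψ a = ψ b → ∃ g : G, g • a = b := fun a b h =>
    (hψF a b).2 (h ▸ hFrefl (ψ a))
  have hcnt : ∀ x : X, (ψ '' MulAction.orbit G x).Countable := fun x =>
    (hFcnt (ψ x)).mono (by rintro _ ⟨x', hx', rfl⟩; exact (hψF x x').1 hx')
  borelize G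
  obtain ⟨U, hU, hUne⟩ := exists_nat_basis G
  have hact : Measurable fun p : X × G => p.2 • p.1 :=
    (continuous_snd.smul continuous_fst).measurable
  have hker : MeasurableSet {p : X × X | ψ p.1 = ψ p.2} :=
    (hψ.prodMap hψ) isClosed_diagonal.measurableSet
  obtain ⟨t, -, _, _, hψt, hDt⟩ := exists_polishSpace_continuous_isClosed hψ fun n =>
    measurableSet_stableLocus hact hker (hU.isOpen (mem_range_self n))
  -- the refined topology `t` and its Polish and Borel instances are now the ones found first
  exact isSigmaLacunary_of_isClosed_stableLocus hψt hact horb hcnt hU hUne hDt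
end
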